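/- arXiv:2403.05360 — 12 statements merged into one kernel-verified Lean document; each statement's English description precedes it below -/
import Mathlib

section
/- If a finite connected graph G is AT-free (1-AT-free), then G has a path P of eccentricity at most 1, i.e., every vertex of G is in the closed neighborhood of V(P). -/
/-!
Write `C(x, y)` for the set of vertices reachable from `x` by a walk avoiding `N[y]`. Choose a
pair `(a, b)` maximizing `|C(a, b) ∪ C(b, a)|` and then `|C(a, b)| + |C(b, a)|`
lexicographically, and an `a`–`b` path `P`. If a vertex `u` were not dominated by `P`, then
AT-freeness of `{a, b, u}` gives `u ∉ C(a, b)`, say. But then `C(a, b) ⊊ C(a, u)` (it gains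
`b`), and the pair `(a, u)` beats `(a, b)`: either `u ∈ C(b, a)` and `C(u, a) = C(b, a)`, or
`C(b, a) ⊆ C(a, u)` and the union gains `u`.
-/

open SimpleGraph

/-- An asteroidal triple: three distinct vertices such that each pair is joined
by a path avoiding the closed neighborhood of the third. -/
def IsAT {V : Type*} (G : SimpleGraph V) (x y z : V) : Prop :=
  x ≠ y ∧ y ≠ z ∧ x ≠ z ∧
  (∃ p : G.Walk x y, p.IsPath ∧ ∀ w ∈ p.support, w ≠ z ∧ ¬ G.Adj z w) ∧
  (∃ p : G.Walk x z, p.IsPath ∧ ∀ w ∈ p.support, w ≠ y ∧ ¬ G.Adj y w) ∧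
  (∃ p : G.Walk y z, p.IsPath ∧ ∀ w ∈ p.support, w ≠ x ∧ ¬ G.Adj x w)

namespace SimpleGraph

variable {V : Type*} {G : SimpleGraph V}

def closedNbhd (G : SimpleGraph V) (v : V) : Set V := insert v (G.neighborSet v)

theorem mem_closedNbhd {v w : V} : w ∈ G.closedNbhd v ↔ w = v ∨ G.Adj v w := Iff.rfl

theorem mem_closedNbhd_comm {v w : V} : w ∈ G.closedNbhd v ↔ v ∈ G.closedNbhd w := by
  simp only [mem_closedNbhd, eq_comm, G.adj_comm]

theorem self_mem_closedNbhd (v : V) : v ∈ G.closedNbhd v := Set.mem_insert v _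

def Walk.Avoids {x w : V} (q : G.Walk x w) (s : Set V) : Prop := ∀ v ∈ q.support, v ∉ s

namespace Walk.Avoids

variable {x w w' : V} {s : Set V}

theorem start_notMem {q : G.Walk x w} (hq : q.Avoids s) : x ∉ s := hq x q.start_mem_support

theorem end_notMem {q : G.Walk x w} (hq : q.Avoids s) : w ∉ s := hq w q.end_mem_support

theorem reverse {q : G.Walk x w} (hq : q.Avoids s) : q.reverse.Avoids s := fun v hv =>
  hq v (by rwa [Walk.support_reverse, List.mem_reverse] at hv)

theorem append {q : G.Walk x w} {q' : G.Walk w w'} (hq : q.Avoids s) (hq' : q'.Avoids s) :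
    (q.append q').Avoids s := fun v hv =>
  (Walk.mem_support_append_iff q q').mp hv |>.elim (hq v) (hq' v)

theorem takeUntil [DecidableEq V] {q : G.Walk x w} (hq : q.Avoids s) {v : V}
    (hv : v ∈ q.support) : (q.takeUntil v hv).Avoids s := fun z hz =>
  hq z (q.support_takeUntil_subset_support hv hz)

theorem bypass [DecidableEq V] {q : G.Walk x w} (hq : q.Avoids s) : q.bypass.Avoids s :=
  fun z hz => hq z (q.support_bypass_subset_support hz)

end Walk.Avoids

def componentAvoiding (G : SimpleGraph V) (x y : V) : Set V :=
  {w | ∃ q : G.Walk x w, q.Avoids (G.closedNbhd y)}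

variable {x y w u : V}

theorem mem_componentAvoiding_self (hx : x ∉ G.closedNbhd y) : x ∈ G.componentAvoiding x y :=
  ⟨Walk.nil, fun v hv => by rwa [List.mem_singleton.mp hv]⟩

theorem right_notMem_componentAvoiding : y ∉ G.componentAvoiding x y :=
  fun ⟨_, hq⟩ => hq.end_notMem (self_mem_closedNbhd y)

theorem componentAvoiding_eq_of_mem (hw : w ∈ G.componentAvoiding x y) :
    G.componentAvoiding w y = G.componentAvoiding x y := by
  obtain ⟨q, hq⟩ := hw
  ext t
  exact ⟨fun ⟨q', hq'⟩ => ⟨q.append q', hq.append hq'⟩,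
    fun ⟨q', hq'⟩ => ⟨q.reverse.append q', hq.reverse.append hq'⟩⟩

/-- A walk outside `N[y]` that meets `N[u]` can be stopped at its first such vertex, and then
continued to `u` itself. -/
theorem Walk.Avoids.avoids_or_mem_componentAvoiding {q : G.Walk x w}
    (hq : q.Avoids (G.closedNbhd y)) (hu : u ∉ G.closedNbhd y) :
    q.Avoids (G.closedNbhd u) ∨ u ∈ G.componentAvoiding x y := by
  classical
  refine or_iff_not_imp_left.mpr fun hmeet => ?_
  obtain ⟨v, hv, hvu⟩ : ∃ v ∈ q.support, v ∈ G.closedNbhd u := by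
    simpa [Walk.Avoids] using hmeet
  have hq' := hq.takeUntil hv
  rcases mem_closedNbhd.mp hvu with rfl | hadj
  · exact ⟨_, hq'⟩
  · refine ⟨(q.takeUntil v hv).concat hadj.symm, fun z hz => ?_⟩
    rw [Walk.support_concat, List.mem_append, List.mem_singleton] at hz
    exact hz.elim (hq' z) fun h => h ▸ hu

theorem componentAvoiding_subset (hu : u ∉ G.closedNbhd y)
    (hux : u ∉ G.componentAvoiding x y) :
    G.componentAvoiding x y ⊆ G.componentAvoiding x u := fun _ ⟨q, hq⟩ =>
  ⟨q, (hq.avoids_or_mem_componentAvoiding hu).resolve_right hux⟩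

theorem componentAvoiding_union_subset {a b : V} (W : G.Walk a b)
    (hW : W.Avoids (G.closedNbhd u)) (hu : u ∉ G.componentAvoiding a b) :
    G.componentAvoiding a b ∪ G.componentAvoiding b a ⊆
      G.componentAvoiding a u ∪ G.componentAvoiding u a := by
  have hub : u ∉ G.closedNbhd b := mem_closedNbhd_comm.not.mp hW.end_notMem
  have hua : u ∉ G.closedNbhd a := mem_closedNbhd_comm.not.mp hW.start_notMem
  refine Set.union_subset (componentAvoiding_subset hub hu |>.trans Set.subset_union_left) ?_
  by_cases hu' : u ∈ G.componentAvoiding b a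
  · exact (componentAvoiding_eq_of_mem hu').symm ▸ Set.subset_union_right
  · have hb : b ∈ G.componentAvoiding a u := ⟨W, hW⟩
    calc G.componentAvoiding b a ⊆ G.componentAvoiding b u := componentAvoiding_subset hua hu'
      _ = G.componentAvoiding a u := componentAvoiding_eq_of_mem hb
      _ ⊆ _ := Set.subset_union_left

noncomputable def pairPotential (G : SimpleGraph V) (a b : V) : ℕ ×ₗ ℕ :=
  toLex ((G.componentAvoiding a b ∪ G.componentAvoiding b a).ncard,
    (G.componentAvoiding a b).ncard + (G.componentAvoiding b a).ncard)

theorem pairPotential_comm (a b : V) : G.pairPotential a b = G.pairPotential b a := by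
  rw [pairPotential, pairPotential, Set.union_comm, Nat.add_comm]

theorem pairPotential_lt [Finite V] {a b : V} (W : G.Walk a b)
    (hW : W.Avoids (G.closedNbhd u)) (hu : u ∉ G.componentAvoiding a b) :
    G.pairPotential a b < G.pairPotential a u := by
  have hsub := componentAvoiding_union_subset W hW hu
  refine Prod.Lex.toLex_lt_toLex'.mpr ⟨Set.ncard_le_ncard hsub, fun hcard => ?_⟩
  have hunion := Set.eq_of_subset_of_ncard_le hsub hcard.ge
  have hua : u ∈ G.componentAvoiding b a := by
    have hu' : u ∈ G.componentAvoiding a u ∪ G.componentAvoiding u a :=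
      Or.inr (mem_componentAvoiding_self (mem_closedNbhd_comm.not.mp hW.start_notMem))
    exact (hunion ▸ hu').resolve_left hu
  have hssub : G.componentAvoiding a b ⊂ G.componentAvoiding a u :=
    (Set.ssubset_iff_of_subset (componentAvoiding_subset
      (mem_closedNbhd_comm.not.mp hW.end_notMem) hu)).mpr
      ⟨b, ⟨W, hW⟩, right_notMem_componentAvoiding⟩
  show _ + _ < _ + _
  rw [componentAvoiding_eq_of_mem hua]
  exact Nat.add_lt_add_right (Set.ncard_lt_ncard hssub) _

theorem isAT_of_avoids [DecidableEq V] {x y z : V} (p : G.Walk x y)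
    (hp : p.Avoids (G.closedNbhd z)) (q : G.Walk x z) (hq : q.Avoids (G.closedNbhd y))
    (r : G.Walk y z) (hr : r.Avoids (G.closedNbhd x)) : IsAT G x y z := by
  have avoids_iff {a b c : V} (s : G.Walk a b) :
      s.Avoids (G.closedNbhd c) ↔ ∀ w ∈ s.support, w ≠ c ∧ ¬ G.Adj c w := by
    simp only [Walk.Avoids, mem_closedNbhd, not_or]
  refine ⟨fun h => hq.start_notMem (by subst h; exact self_mem_closedNbhd _),
    fun h => hp.end_notMem (by subst h; exact self_mem_closedNbhd _),
    fun h => hp.start_notMem (by subst h; exact self_mem_closedNbhd _),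
    ⟨p.bypass, p.bypass_isPath, (avoids_iff _).mp hp.bypass⟩,
    ⟨q.bypass, q.bypass_isPath, (avoids_iff _).mp hq.bypass⟩,
    ⟨r.bypass, r.bypass_isPath, (avoids_iff _).mp hr.bypass⟩⟩

end SimpleGraph

/-- A finite connected AT-free graph has a path of eccentricity at most 1:
every vertex is in the closed neighborhood of the path. -/
theorem ATfree_pathEcc_le_one {V : Type*} [Fintype V] (G : SimpleGraph V)
    (hG : G.Connected) (hAT : ∀ x y z : V, ¬ IsAT G x y z) :
    ∃ (x y : V) (p : G.Walk x y), p.IsPath ∧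
      ∀ u : V, ∃ v ∈ p.support, u = v ∨ G.Adj v u := by
  classical
  have := hG.nonempty
  obtain ⟨⟨a, b⟩, hmax⟩ := Finite.exists_max fun ab : V × V => G.pairPotential ab.1 ab.2
  obtain ⟨p⟩ := hG.preconnected a b
  refine ⟨a, b, p.bypass, p.bypass_isPath, fun u => ?_⟩
  by_contra hu
  have hp : p.bypass.Avoids (G.closedNbhd u) := fun v hv hvu =>
    hu ⟨v, hv, mem_closedNbhd.mp (mem_closedNbhd_comm.mp hvu)⟩
  by_cases hab : u ∈ G.componentAvoiding a b
  · have hba : u ∉ G.componentAvoiding b a := by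
      rintro ⟨r, hr⟩
      obtain ⟨q, hq⟩ := hab
      exact hAT a b u (isAT_of_avoids _ hp q hq r hr)
    have hlt := pairPotential_lt p.bypass.reverse hp.reverse hba
    rw [pairPotential_comm] at hlt
    exact (hmax (b, u)).not_gt hlt
  · exact (hmax (a, u)).not_gt (pairPotential_lt p.bypass hp hab)
end

section
/- The k-subdivided claw (the tree obtained from the star K_{1,3} by subdividing each edge so that each of the three legs is a path of length k from the center) has path eccentricity exactly k. -/
open SimpleGraph

/-- The `k`-subdivided claw: a center vertex (`none`) together with three disjoint
paths of length `k`; `some (i, j)` is the `(j+1)`-st vertex on leg `i`. -/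
def subdividedClaw (k : ℕ) : SimpleGraph (Option (Fin 3 × Fin k)) :=
  SimpleGraph.fromRel (fun a b =>
    (∃ (i : Fin 3) (j : Fin k), a = none ∧ b = some (i, j) ∧ (j : ℕ) = 0) ∨
    (∃ (i : Fin 3) (j j' : Fin k), a = some (i, j) ∧ b = some (i, j') ∧
      (j' : ℕ) = (j : ℕ) + 1))

/-!
The center alone is a path of eccentricity `k`, since every vertex lies on a leg of length `k`.
Conversely, each vertex of a path other than the center is joined to one of the two endpoints
by a subpath avoiding the center, hence lies on the leg of that endpoint; so some leg `i` misses
the path. The depth in leg `i` (zero off that leg) changes by at most one along an edge, so the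
tip of leg `i`, at depth `k`, is at distance at least `k` from every vertex of the path.
-/

namespace SimpleGraph

variable {V : Type*} {G : SimpleGraph V} {u v w c : V}

namespace Walk

lemma apply_le_length_add {f : V → ℕ} (hf : ∀ a b, G.Adj a b → f a ≤ f b + 1)
    (p : G.Walk u v) : f u ≤ p.length + f v := by
  induction p with
  | nil => simp
  | cons h p ih =>
    have := hf _ _ h
    rw [length_cons]
    omega

lemma apply_eq_of_notMem_support {α : Type*} {f : V → α}
    (hf : ∀ a b, G.Adj a b → a ≠ c → b ≠ c → f a = f b) (p : G.Walk u v)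
    (hc : c ∉ p.support) : f u = f v := by
  induction p with
  | nil => rfl
  | cons h p ih =>
    rw [support_cons, List.mem_cons, not_or] at hc
    exact (hf _ _ h (Ne.symm hc.1) fun he => hc.2 (he ▸ p.start_mem_support)).trans (ih hc.2)

lemma IsPath.notMem_takeUntil_or_notMem_dropUntil [DecidableEq V] {p : G.Walk u v}
    (hp : p.IsPath) (hw : w ∈ p.support) (hc : c ≠ w) :
    c ∉ (p.takeUntil w hw).support ∨ c ∉ (p.dropUntil w hw).support := by
  have hnodup := hp.support_nodup
  rw [← p.take_spec hw, support_append, List.nodup_append] at hnodup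
  by_contra! h
  rw [← (p.dropUntil w hw).cons_tail_support, List.mem_cons] at h
  exact hnodup.2.2 c h.1 c (h.2.resolve_left hc) rfl

end Walk

lemma Reachable.apply_le_dist_add {f : V → ℕ} (hf : ∀ a b, G.Adj a b → f a ≤ f b + 1)
    (h : G.Reachable u v) : f u ≤ G.dist u v + f v := by
  obtain ⟨p, hp⟩ := h.exists_walk_length_eq_dist
  exact hp ▸ p.apply_le_length_add hf

end SimpleGraph

namespace subdividedClaw

variable {k : ℕ}

def leg : Option (Fin 3 × Fin k) → Option (Fin 3) := Option.map Prod.fst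

def depth (i : Fin 3) : Option (Fin 3 × Fin k) → ℕ
  | none => 0
  | some (i', j) => if i' = i then j + 1 else 0

lemma depth_le_of_adj {i : Fin 3} {a b : Option (Fin 3 × Fin k)}
    (h : (subdividedClaw k).Adj a b) : depth i a ≤ depth i b + 1 := by
  rw [subdividedClaw, fromRel_adj] at h
  obtain ⟨-, h | h⟩ := h <;>
    rcases h with ⟨i', j, rfl, rfl, hj⟩ | ⟨i', j, j', rfl, rfl, hj⟩ <;>
      simp only [depth] <;> split <;> omega

lemma leg_eq_of_adj {a b : Option (Fin 3 × Fin k)} (h : (subdividedClaw k).Adj a b)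
    (ha : a ≠ none) (hb : b ≠ none) : leg a = leg b := by
  rw [subdividedClaw, fromRel_adj] at h
  obtain ⟨-, h | h⟩ := h <;>
    rcases h with ⟨i', j, rfl, rfl, hj⟩ | ⟨i', j, j', rfl, rfl, hj⟩ <;>
      simp_all [leg]

lemma depth_eq_zero_of_leg_ne {i : Fin 3} {v : Option (Fin 3 × Fin k)} (h : leg v ≠ some i) :
    depth i v = 0 := by
  rcases v with _ | ⟨i', j⟩
  · rfl
  · simp_all [leg, depth]

lemma adj_none_zero (i : Fin 3) (hk : 0 < k) :
    (subdividedClaw k).Adj (some (i, ⟨0, hk⟩)) none := by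
  rw [subdividedClaw, fromRel_adj]
  exact ⟨by simp, .inr (.inl ⟨i, ⟨0, hk⟩, rfl, rfl, rfl⟩)⟩

lemma adj_succ (i : Fin 3) {j : ℕ} (hj : j + 1 < k) :
    (subdividedClaw k).Adj (some (i, ⟨j + 1, hj⟩)) (some (i, ⟨j, by omega⟩)) := by
  rw [subdividedClaw, fromRel_adj]
  exact ⟨by simp [Fin.ext_iff], .inr (.inr ⟨i, ⟨j, by omega⟩, ⟨j + 1, hj⟩, rfl, rfl, rfl⟩)⟩

lemma exists_walk_none (i : Fin 3) (j : Fin k) :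
    ∃ p : (subdividedClaw k).Walk (some (i, j)) none, p.length = j + 1 := by
  obtain ⟨j, hj⟩ := j
  induction j with
  | zero => exact ⟨.cons (adj_none_zero i hj) .nil, rfl⟩
  | succ j ih =>
    obtain ⟨p, hp⟩ := ih (by omega)
    exact ⟨.cons (adj_succ i hj) p, by simp [hp]⟩

lemma reachable_none (u : Option (Fin 3 × Fin k)) : (subdividedClaw k).Reachable u none := by
  rcases u with _ | ⟨i, j⟩
  · rfl
  · exact (exists_walk_none i j).elim fun p _ => ⟨p⟩


lemma dist_none_le (u : Option (Fin 3 × Fin k)) : (subdividedClaw k).dist u none ≤ k := by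
  rcases u with _ | ⟨i, j⟩
  · simp
  · obtain ⟨p, hp⟩ := exists_walk_none i j
    exact (dist_le p).trans (hp ▸ j.isLt)

lemma leg_eq_or_leg_eq_of_isPath {x y v : Option (Fin 3 × Fin k)}
    {p : (subdividedClaw k).Walk x y} (hp : p.IsPath) (hv : v ∈ p.support) (hv' : v ≠ none) :
    leg v = leg x ∨ leg v = leg y := by
  have hleg : ∀ a b, (subdividedClaw k).Adj a b → a ≠ none → b ≠ none → leg a = leg b :=
    fun _ _ => leg_eq_of_adj
  rcases hp.notMem_takeUntil_or_notMem_dropUntil hv (Ne.symm hv') with h | h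
  · exact .inl ((p.takeUntil v hv).apply_eq_of_notMem_support hleg h).symm
  · exact .inr ((p.dropUntil v hv).apply_eq_of_notMem_support hleg h)

lemma le_dist_tip (hk : 1 ≤ k) {i : Fin 3} {v : Option (Fin 3 × Fin k)} (hv : leg v ≠ some i) :
    k ≤ (subdividedClaw k).dist (some (i, ⟨k - 1, by omega⟩)) v := by
  have := ((reachable_none (some (i, ⟨k - 1, by omega⟩))).trans
    (reachable_none v).symm).apply_le_dist_add (fun _ _ => depth_le_of_adj (i := i))
  rw [depth_eq_zero_of_leg_ne hv] at this
  simp only [depth, if_true] at this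
  omega

end subdividedClaw

open subdividedClaw in
/-- The `k`-subdivided claw has path eccentricity exactly `k`: some path has
eccentricity at most `k`, and every path has eccentricity at least `k`. -/
theorem subdividedClaw_pathEcc (k : ℕ) (hk : 1 ≤ k) :
    (∃ (x y : Option (Fin 3 × Fin k)) (p : (subdividedClaw k).Walk x y), p.IsPath ∧
      ∀ u, ∃ v ∈ p.support, (subdividedClaw k).dist u v ≤ k) ∧
    (∀ (x y : Option (Fin 3 × Fin k)) (p : (subdividedClaw k).Walk x y), p.IsPath →
      ∃ u, ∀ v ∈ p.support, k ≤ (subdividedClaw k).dist u v) := by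
  refine ⟨⟨none, none, .nil, .nil, fun u => ⟨none, by simp, dist_none_le u⟩⟩, ?_⟩
  intro x y p hp
  obtain ⟨i, hix, hiy⟩ : ∃ i : Fin 3, some i ≠ leg x ∧ some i ≠ leg y := by
    generalize leg x = a, leg y = b
    revert a b
    decide
  refine ⟨some (i, ⟨k - 1, by omega⟩), fun v hv => le_dist_tip hk ?_⟩
  rcases eq_or_ne v none with rfl | hv'
  · simp [leg]
  · rcases leg_eq_or_leg_eq_of_isPath hp hv hv' with h | h <;> rw [h] <;> exact Ne.symm ‹_›
end

section
/- For every k ≥ 1, the k-subdivided claw contains a (k−1)-asteroidal triple but contains no k-asteroidal triple (i.e., it is k-AT-free but not (k−1)-AT-free, where for k = 1 the first claim is that it contains a 0-AT). -/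
open SimpleGraph

/-- A `k`-asteroidal triple. -/
def IsKAT {V : Type*} (G : SimpleGraph V) (k : ℕ) (x y z : V) : Prop :=
  x ≠ y ∧ y ≠ z ∧ x ≠ z ∧
  (∃ p : G.Walk x y, p.IsPath ∧ ∀ w ∈ p.support, (k : ℕ∞) < G.edist z w) ∧
  (∃ p : G.Walk x z, p.IsPath ∧ ∀ w ∈ p.support, (k : ℕ∞) < G.edist y w) ∧
  (∃ p : G.Walk y z, p.IsPath ∧ ∀ w ∈ p.support, (k : ℕ∞) < G.edist x w)

namespace SubClawAux

variable {k : ℕ}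

/-- Position of a vertex relative to branch `i`. -/
def pos (i : Fin 3) : Option (Fin 3 × Fin k) → ℕ
  | none => 0
  | some (i', j) => if i' = i then (j : ℕ) + 1 else 0

lemma pos_none (i : Fin 3) : pos (k := k) i none = 0 := rfl

lemma pos_some_self (i : Fin 3) (j : Fin k) : pos i (some (i, j)) = (j : ℕ) + 1 := by
  simp [pos]

lemma pos_some_other {i i' : Fin 3} (h : i' ≠ i) (j : Fin k) : pos i (some (i', j)) = 0 := by
  simp [pos, h]

lemma adj_pos (i : Fin 3) {a b : Option (Fin 3 × Fin k)}
    (h : (subdividedClaw k).Adj a b) : pos i a ≤ pos i b + 1 := by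
  rw [subdividedClaw, fromRel_adj] at h
  obtain ⟨-, h | h⟩ := h <;>
  · rcases h with ⟨i', j, rfl, rfl, hj⟩ | ⟨i', j, j', rfl, rfl, hj⟩ <;>
    · by_cases hii : i' = i <;> simp [pos, hii] <;> omega

lemma walk_pos_le (i : Fin 3) {a b : Option (Fin 3 × Fin k)}
    (p : (subdividedClaw k).Walk a b) : pos i a ≤ pos i b + p.length := by
  induction p with
  | nil => simp
  | cons h q ih =>
    have := adj_pos i h
    simp only [SimpleGraph.Walk.length_cons]
    omega

lemma edist_pos_le (i : Fin 3) (a b : Option (Fin 3 × Fin k)) :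
    (pos i a : ℕ∞) ≤ (pos i b : ℕ∞) + (subdividedClaw k).edist a b := by
  by_cases hr : (subdividedClaw k).Reachable a b
  · obtain ⟨p, hp⟩ := hr.exists_walk_length_eq_edist
    rw [← hp, ← Nat.cast_add, Nat.cast_le]
    exact walk_pos_le i p
  · rw [edist_eq_top_of_not_reachable hr]
    simp

/-- Discrete intermediate value theorem along a walk. -/
lemma ivt (i : Fin 3) {a b : Option (Fin 3 × Fin k)}
    (p : (subdividedClaw k).Walk a b) (m : ℕ)
    (h : (pos i a ≤ m ∧ m ≤ pos i b) ∨ (pos i b ≤ m ∧ m ≤ pos i a)) :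
    ∃ w ∈ p.support, pos i w = m := by
  induction p with
  | nil =>
    refine ⟨_, SimpleGraph.Walk.start_mem_support _, ?_⟩
    omega
  | @cons a u b hadj q ih =>
    by_cases hm : pos i a = m
    · exact ⟨a, by simp, hm⟩
    · have h1 := adj_pos i hadj
      have h2 := adj_pos i hadj.symm
      obtain ⟨w, hw, hwm⟩ := ih (by omega)
      exact ⟨w, by simp [hw], hwm⟩

/-- The walk from `(i, j)` down to the center. -/
def wtc (i : Fin 3) : (j : ℕ) → (hj : j < k) →
    (subdividedClaw k).Walk (some (i, ⟨j, hj⟩)) none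
  | 0, hj => SimpleGraph.Walk.cons
      (by
        rw [subdividedClaw, fromRel_adj]
        exact ⟨by simp, Or.inr (Or.inl ⟨i, ⟨0, hj⟩, rfl, rfl, rfl⟩)⟩) SimpleGraph.Walk.nil
  | j + 1, hj => SimpleGraph.Walk.cons
      (show (subdividedClaw k).Adj (some (i, ⟨j + 1, hj⟩)) (some (i, ⟨j, Nat.lt_of_succ_lt hj⟩)) by
        rw [subdividedClaw, fromRel_adj]
        refine ⟨by simp [Fin.ext_iff], Or.inr (Or.inr
          ⟨i, ⟨j, Nat.lt_of_succ_lt hj⟩, ⟨j + 1, hj⟩, rfl, rfl, rfl⟩)⟩)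
      (wtc i j (Nat.lt_of_succ_lt hj))

lemma wtc_length (i : Fin 3) : ∀ (j : ℕ) (hj : j < k), (wtc i j hj).length = j + 1
  | 0, hj => rfl
  | j + 1, hj => by
    simp only [wtc, SimpleGraph.Walk.length_cons, wtc_length i j]

lemma wtc_support (i : Fin 3) : ∀ (j : ℕ) (hj : j < k),
    ∀ w ∈ (wtc i j hj).support,
      w = none ∨ ∃ (m : ℕ) (hm : m < k), m ≤ j ∧ w = some (i, ⟨m, hm⟩)
  | 0, hj => by
    intro w hw
    simp only [wtc, SimpleGraph.Walk.support_cons, SimpleGraph.Walk.support_nil,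
      List.mem_cons, List.mem_singleton] at hw
    rcases hw with rfl | rfl | hw
    · exact Or.inr ⟨0, hj, le_refl 0, rfl⟩
    · exact Or.inl rfl
    · exact absurd hw List.not_mem_nil
  | j + 1, hj => by
    intro w hw
    simp only [wtc, SimpleGraph.Walk.support_cons, List.mem_cons] at hw
    rcases hw with rfl | hw
    · exact Or.inr ⟨j + 1, hj, le_refl _, rfl⟩
    · rcases wtc_support i j (by omega) w hw with h | ⟨m, hm, hmj, rfl⟩
      · exact Or.inl h
      · exact Or.inr ⟨m, hm, by omega, rfl⟩

lemma wtc_nodup (i : Fin 3) : ∀ (j : ℕ) (hj : j < k), (wtc i j hj).support.Nodup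
  | 0, hj => by simp [wtc]
  | j + 1, hj => by
    simp only [wtc, SimpleGraph.Walk.support_cons, List.nodup_cons]
    refine ⟨fun hmem => ?_, wtc_nodup i j (by omega)⟩
    rcases wtc_support i j (by omega) _ hmem with h | ⟨m, hm, hmj, h⟩
    · exact (Option.some_ne_none _ h).elim
    · have : j + 1 = m := by
        have := Option.some.inj h
        have := Prod.ext_iff.mp this
        simpa [Fin.ext_iff] using this.2
      omega

lemma edist_none_le (v : Option (Fin 3 × Fin k)) :
    (subdividedClaw k).edist v none ≤ (k : ℕ∞) := by
  match v with
  | none => simp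
  | some (i, j) =>
    have h := SimpleGraph.edist_le (wtc i (j : ℕ) j.isLt)
    rw [wtc_length] at h
    calc (subdividedClaw k).edist (some (i, j)) none
        = (subdividedClaw k).edist (some (i, ⟨(j : ℕ), j.isLt⟩)) none := by
          congr
      _ ≤ ((j : ℕ) + 1 : ℕ) := h
      _ ≤ (k : ℕ∞) := by
          rw [Nat.cast_le]
          omega

lemma edist_none_le' (v : Option (Fin 3 × Fin k)) :
    (subdividedClaw k).edist none v ≤ (k : ℕ∞) := by
  rw [SimpleGraph.edist_comm]; exact edist_none_le v

/-- Walks avoiding the center stay within one branch. -/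
lemma branch_stay {a b : Option (Fin 3 × Fin k)} (p : (subdividedClaw k).Walk a b) :
    none ∉ p.support → ∀ (i : Fin 3) (j : Fin k), a = some (i, j) →
      ∃ j', b = some (i, j') := by
  induction p with
  | nil => exact fun _ i j ha => ⟨j, ha⟩
  | @cons a u b hadj q ih =>
    intro hn i j ha
    subst ha
    rw [SimpleGraph.Walk.support_cons, List.mem_cons] at hn
    push_neg at hn
    obtain ⟨hn1, hn2⟩ := hn
    rw [subdividedClaw, fromRel_adj] at hadj
    obtain ⟨hne, h | h⟩ := hadj
    · rcases h with ⟨i', j', h1, h2, h3⟩ | ⟨i', j', j'', h1, h2, h3⟩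
      · exact absurd h1 (by simp)
      · injection Option.some.inj h1 with hi hj
        exact (ih hn2 i' j'' h2).imp fun _ hh => by rwa [hi]
    · rcases h with ⟨i', j', h1, h2, h3⟩ | ⟨i', j', j'', h1, h2, h3⟩
      · subst h1
        exact absurd (SimpleGraph.Walk.start_mem_support q) hn2
      · injection Option.some.inj h2 with hi hj
        exact (ih hn2 i' j' h1).imp fun _ hh => by rwa [hi]

/-- Membership in the closed branch `i` (center plus branch). -/
def InBr (i : Fin 3) (v : Option (Fin 3 × Fin k)) : Prop :=
  v = none ∨ ∃ j : Fin k, v = some (i, j)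

lemma pos_inj {i : Fin 3} {u v : Option (Fin 3 × Fin k)}
    (hu : InBr i u) (hv : InBr i v) (h : pos i u = pos i v) : u = v := by
  rcases hu with rfl | ⟨ju, rfl⟩ <;> rcases hv with rfl | ⟨jv, rfl⟩
  · rfl
  · rw [pos_none, pos_some_self] at h; omega
  · rw [pos_none, pos_some_self] at h; omega
  · rw [pos_some_self, pos_some_self] at h
    have : ju = jv := Fin.ext (by omega)
    rw [this]

lemma edist_le_of_pos_eq {i : Fin 3} {z w : Option (Fin 3 × Fin k)}
    (hz : InBr i z) (h : pos i z = pos i w) :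
    (subdividedClaw k).edist z w ≤ (k : ℕ∞) := by
  rcases hz with rfl | ⟨j, rfl⟩
  · exact edist_none_le' w
  · have hw : w = some (i, j) := by
      rw [pos_some_self] at h
      match w with
      | none => rw [pos_none] at h; omega
      | some (i', j') =>
        by_cases hii : i' = i
        · subst hii
          rw [pos_some_self] at h
          have : j' = j := Fin.ext (by omega)
          rw [this]
        · rw [pos_some_other hii] at h; omega
    rw [hw, SimpleGraph.edist_self]
    exact zero_le

/-- If the two endpoints are in different branches, no walk between them avoids
`N^k` of any third vertex. -/
lemma pair_fail {i i' : Fin 3} {j j' : Fin k} (hii : i ≠ i')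
    (p : (subdividedClaw k).Walk (some (i, j)) (some (i', j')))
    (c : Option (Fin 3 × Fin k))
    (H : ∀ w ∈ p.support, (k : ℕ∞) < (subdividedClaw k).edist c w) : False := by
  by_cases hn : none ∈ p.support
  · exact absurd (edist_none_le c) (not_le.mpr (H none hn))
  · obtain ⟨j'', h⟩ := branch_stay p hn i j rfl
    exact hii (Prod.ext_iff.mp (Option.some.inj h)).1.symm

lemma median_fail {i : Fin 3} {a b z : Option (Fin 3 × Fin k)}
    (hz : InBr i z)
    (hmid : (pos i a ≤ pos i z ∧ pos i z ≤ pos i b) ∨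
            (pos i b ≤ pos i z ∧ pos i z ≤ pos i a))
    (p : (subdividedClaw k).Walk a b)
    (H : ∀ w ∈ p.support, (k : ℕ∞) < (subdividedClaw k).edist z w) : False := by
  obtain ⟨w, hw, hwp⟩ := ivt i p (pos i z) hmid
  exact absurd (edist_le_of_pos_eq hz hwp.symm) (not_le.mpr (H w hw))

end SubClawAux

open SubClawAux in
/-- The leaf-to-leaf path lemma for part 1. -/
lemma leaf_path {k : ℕ} (hk : 1 ≤ k) (i1 i2 i3 : Fin 3)
    (h12 : i1 ≠ i2) (h31 : i3 ≠ i1) (h32 : i3 ≠ i2) :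
    ∃ p : (subdividedClaw k).Walk (some (i1, ⟨k - 1, by omega⟩)) (some (i2, ⟨k - 1, by omega⟩)),
      p.IsPath ∧ ∀ w ∈ p.support,
        ((k - 1 : ℕ) : ℕ∞) < (subdividedClaw k).edist (some (i3, ⟨k - 1, by omega⟩)) w := by
  set p1 := wtc (k := k) i1 (k - 1) (by omega) with hp1
  set p2 := wtc (k := k) i2 (k - 1) (by omega) with hp2
  refine ⟨p1.append p2.reverse, ?_, ?_⟩
  · apply SimpleGraph.Walk.IsPath.mk'
    rw [SimpleGraph.Walk.support_append, List.nodup_append]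
    have h2rev : p2.reverse.support = p2.support.reverse := SimpleGraph.Walk.support_reverse p2
    have h2nodup : p2.reverse.support.Nodup := by
      rw [h2rev]; exact List.nodup_reverse.mpr (wtc_nodup i2 _ _)
    have hhead : p2.reverse.support = none :: p2.reverse.support.tail :=
      SimpleGraph.Walk.support_eq_cons p2.reverse
    refine ⟨wtc_nodup i1 _ _, ?_, ?_⟩
    · exact h2nodup.tail
    · intro a ha b hatail hab
      rw [← hab] at hatail
      have hnone : none ∉ p2.reverse.support.tail := by
        intro hmem
        rw [hhead] at h2nodup
        exact (List.nodup_cons.mp h2nodup).1 hmem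
      have ha2 : a ∈ p2.support := by
        have : a ∈ p2.reverse.support := by
          rw [hhead]; exact List.mem_cons_of_mem _ hatail
        rwa [h2rev, List.mem_reverse] at this
      rcases wtc_support i1 _ _ a ha with rfl | ⟨m, hm, hmj, rfl⟩
      · exact hnone hatail
      · rcases wtc_support i2 _ _ _ ha2 with h | ⟨m', hm', hmj', h⟩
        · exact (Option.some_ne_none _ h).elim
        · exact h12 (Prod.ext_iff.mp (Option.some.inj h)).1
  · intro w hw
    have hw' : w ∈ p1.support ∨ w ∈ p2.reverse.support := by
      rw [SimpleGraph.Walk.mem_support_append_iff] at hw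
      exact hw
    have hpos : pos i3 w = 0 := by
      have hbr : w = none ∨ (∃ (m : ℕ) (hm : m < k), w = some (i1, ⟨m, hm⟩)) ∨
          (∃ (m : ℕ) (hm : m < k), w = some (i2, ⟨m, hm⟩)) := by
        rcases hw' with h | h
        · rcases wtc_support i1 _ _ w h with h' | ⟨m, hm, _, rfl⟩
          · exact Or.inl h'
          · exact Or.inr (Or.inl ⟨m, hm, rfl⟩)
        · rw [SimpleGraph.Walk.support_reverse, List.mem_reverse] at h
          rcases wtc_support i2 _ _ w h with h' | ⟨m, hm, _, rfl⟩
          · exact Or.inl h'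
          · exact Or.inr (Or.inr ⟨m, hm, rfl⟩)
      rcases hbr with rfl | ⟨m, hm, rfl⟩ | ⟨m, hm, rfl⟩
      · rfl
      · exact pos_some_other h31.symm _
      · exact pos_some_other h32.symm _
    have hlow := edist_pos_le i3 (some (i3, ⟨k - 1, by omega⟩)) w
    rw [hpos, pos_some_self] at hlow
    simp only [Nat.cast_zero, zero_add] at hlow
    calc ((k - 1 : ℕ) : ℕ∞) < ((k - 1 + 1 : ℕ) : ℕ∞) := by
          rw [Nat.cast_lt]; omega
      _ ≤ (subdividedClaw k).edist (some (i3, ⟨k - 1, by omega⟩)) w := hlow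

open SubClawAux in
/-- For every `k ≥ 1`, the `k`-subdivided claw contains a `(k-1)`-asteroidal triple
but contains no `k`-asteroidal triple. -/
theorem subdividedClaw_kAT (k : ℕ) (hk : 1 ≤ k) :
    (∃ x y z, IsKAT (subdividedClaw k) (k - 1) x y z) ∧
    (∀ x y z, ¬ IsKAT (subdividedClaw k) k x y z) := by
  constructor
  · -- part 1: the three leaves form a (k-1)-AT
    refine ⟨some (0, ⟨k - 1, by omega⟩), some (1, ⟨k - 1, by omega⟩),
      some (2, ⟨k - 1, by omega⟩), ?_, ?_, ?_, ?_, ?_, ?_⟩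
    · simp [Prod.ext_iff]
    · simp [Prod.ext_iff]
    · simp [Prod.ext_iff]
    · exact leaf_path hk 0 1 2 (by decide) (by decide) (by decide)
    · exact leaf_path hk 0 2 1 (by decide) (by decide) (by decide)
    · exact leaf_path hk 1 2 0 (by decide) (by decide) (by decide)
  · -- part 2: no k-AT
    rintro x y z ⟨hxy, hyz, hxz, ⟨pxy, _, Hxy⟩, ⟨pxz, _, Hxz⟩, ⟨pyz, _, Hyz⟩⟩
    -- Step 1: all `some` vertices among x, y, z lie in a common branch i,
    -- and all of x, y, z lie in InBr i.
    obtain ⟨i, hx, hy, hz⟩ : ∃ i, InBr i x ∧ InBr i y ∧ InBr i z := by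
      match x, y, z with
      | none, none, _ => exact absurd rfl hxy
      | _, none, none => exact absurd rfl hyz
      | none, _, none => exact absurd rfl hxz
      | none, some (iy, jy), some (iz, jz) =>
        refine ⟨iy, Or.inl rfl, Or.inr ⟨jy, rfl⟩, Or.inr ⟨jz, ?_⟩⟩
        by_cases h : iy = iz
        · rw [h]
        · exact absurd (pair_fail h pyz none Hyz) not_false
      | some (ix, jx), none, some (iz, jz) =>
        refine ⟨ix, Or.inr ⟨jx, rfl⟩, Or.inl rfl, Or.inr ⟨jz, ?_⟩⟩
        by_cases h : ix = iz
        · rw [h]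
        · exact absurd (pair_fail h pxz none Hxz) not_false
      | some (ix, jx), some (iy, jy), none =>
        refine ⟨ix, Or.inr ⟨jx, rfl⟩, Or.inr ⟨jy, ?_⟩, Or.inl rfl⟩
        by_cases h : ix = iy
        · rw [h]
        · exact absurd (pair_fail h pxy none Hxy) not_false
      | some (ix, jx), some (iy, jy), some (iz, jz) =>
        have h1 : ix = iy := by
          by_contra h
          exact pair_fail h pxy (some (iz, jz)) Hxy
        have h2 : ix = iz := by
          by_contra h
          exact pair_fail h pxz (some (iy, jy)) Hxz
        exact ⟨ix, Or.inr ⟨jx, rfl⟩, Or.inr ⟨jy, by rw [h1]⟩, Or.inr ⟨jz, by rw [h2]⟩⟩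
    -- Step 2: positions are distinct; the median vertex leads to contradiction.
    have hab : pos i x ≠ pos i y := fun h => hxy (pos_inj hx hy h)
    have hbc : pos i y ≠ pos i z := fun h => hyz (pos_inj hy hz h)
    have hac : pos i x ≠ pos i z := fun h => hxz (pos_inj hx hz h)
    have htri : ((pos i x ≤ pos i z ∧ pos i z ≤ pos i y) ∨
                 (pos i y ≤ pos i z ∧ pos i z ≤ pos i x)) ∨
                ((pos i x ≤ pos i y ∧ pos i y ≤ pos i z) ∨
                 (pos i z ≤ pos i y ∧ pos i y ≤ pos i x)) ∨
                ((pos i y ≤ pos i x ∧ pos i x ≤ pos i z) ∨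
                 (pos i z ≤ pos i x ∧ pos i x ≤ pos i y)) := by omega
    rcases htri with h | h | h
    · exact median_fail hz h pxy Hxy
    · exact median_fail hy h pxz Hxz
    · exact median_fail hx h pyz Hyz
end

section
/- For every k ≥ 1, the cycle C_ℓ with 3k ≤ ℓ ≤ 3k+2 is k-AT-free, and the cycle C_{3k} contains a (k−1)-asteroidal triple (for k ≥ 2). -/
open SimpleGraph

/-!
In `C_n` every walk from `u` to `v` is at least as long as one of the two arcs between them, of
lengths `(v - u).val` and `n - (v - u).val`, and each arc is a walk. The three endpoints of the
paths of a `k`-asteroidal triple are pairwise more than `k` apart, so they cut the cycle into three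
arcs each longer than `k`, forcing `n ≥ 3k + 3`. In `C_{3k}` the vertices `0, k, 2k` form a
`(k - 1)`-asteroidal triple: the arc joining two of them stays at distance at least `k` from the
third.
-/

lemma Fin.val_sub_add_val_eq_or {n : ℕ} (a b : Fin n) :
    (a - b).val + b.val = a.val ∨ (a - b).val + b.val = a.val + n := by
  rcases le_or_gt b a with h | h
  · exact .inl (by rw [Fin.coe_sub_iff_le.mpr h]; omega)
  · exact .inr (by rw [Fin.coe_sub_iff_lt.mpr h]; omega)

section CycleGraph

open Fin.NatCast

variable {n : ℕ}

lemma cycleGraph_sub_val_le_length {u v : Fin n} (p : (cycleGraph n).Walk u v) :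
    (v - u).val ≤ p.length ∨ n ≤ (v - u).val + p.length := by
  induction p with
  | nil => exact .inl (by rw [Fin.coe_sub_iff_le.mpr le_rfl]; simp)
  | @cons u w v hadj q ih =>
    rw [cycleGraph_adj'] at hadj
    have := Fin.val_sub_add_val_eq_or v u
    have := Fin.val_sub_add_val_eq_or v w
    have := Fin.val_sub_add_val_eq_or u w
    have := Fin.val_sub_add_val_eq_or w u
    have := u.isLt; have := v.isLt; have := w.isLt
    simp only [Walk.length_cons]
    omega

lemma le_cycleGraph_edist {u v : Fin n} {c : ℕ} (h₁ : c ≤ (v - u).val)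
    (h₂ : (v - u).val + c ≤ n) : (c : ℕ∞) ≤ (cycleGraph n).edist u v := by
  obtain ⟨p, hp⟩ := (cycleGraph_preconnected u v).exists_walk_length_eq_edist
  rw [← hp, Nat.cast_le]
  rcases cycleGraph_sub_val_le_length p with h | h <;> omega

lemma cycleGraph_adj_add_one [NeZero n] (hn : 2 ≤ n) (u : Fin n) :
    (cycleGraph n).Adj u (u + 1) := by
  rw [cycleGraph_adj', add_sub_cancel_left, Fin.val_one', Nat.mod_eq_of_lt hn]
  exact .inr rfl

lemma cycleGraph_exists_walk_add [NeZero n] (hn : 2 ≤ n) (u : Fin n) (m : ℕ) :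
    ∃ p : (cycleGraph n).Walk u (u + m), p.length = m ∧
      ∀ w ∈ p.support, ∃ i ≤ m, w = u + i := by
  induction m with
  | zero => exact ⟨Walk.nil.copy rfl (by simp), by simp, by simp⟩
  | succ m ih =>
    obtain ⟨p, hlen, hsupp⟩ := ih
    have hadj := cycleGraph_adj_add_one hn (u + m)
    rw [add_assoc, ← Nat.cast_succ] at hadj
    refine ⟨p.concat hadj, by simp [hlen], fun w hw => ?_⟩
    simp only [Walk.support_concat, List.mem_append, List.mem_singleton] at hw
    rcases hw with hw | rfl
    · obtain ⟨i, hi, rfl⟩ := hsupp w hw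
      exact ⟨i, by omega, rfl⟩
    · exact ⟨m + 1, le_rfl, rfl⟩

lemma cycleGraph_edist_le (u v : Fin n) : (cycleGraph n).edist u v ≤ (v - u).val := by
  rcases le_or_gt n 1 with hn | hn
  · have := Fin.subsingleton_iff_le_one.mpr hn
    simp [Subsingleton.elim u v]
  have : NeZero n := ⟨by omega⟩
  obtain ⟨p, hlen, -⟩ := cycleGraph_exists_walk_add hn u (v - u).val
  have h := edist_le p
  rwa [hlen, Fin.cast_val_eq_self, add_sub_cancel] at h

lemma three_mul_add_three_le_of_lt_edist {x y z : Fin n} {k : ℕ}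
    (hxy : k < (cycleGraph n).edist x y) (hxz : k < (cycleGraph n).edist x z)
    (hyz : k < (cycleGraph n).edist y z) : 3 * k + 3 ≤ n := by
  have far : ∀ {a b : Fin n}, k < (cycleGraph n).edist a b → k < (b - a).val ∧ k < (a - b).val :=
    fun {a b} h => ⟨by exact_mod_cast h.trans_le (cycleGraph_edist_le a b),
      by exact_mod_cast (SimpleGraph.edist_comm ▸ h).trans_le (cycleGraph_edist_le b a)⟩
  have := far hxy; have := far hxz; have := far hyz
  have := Fin.val_sub_add_val_eq_or x y; have := Fin.val_sub_add_val_eq_or y x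
  have := Fin.val_sub_add_val_eq_or x z; have := Fin.val_sub_add_val_eq_or z x
  have := Fin.val_sub_add_val_eq_or y z; have := Fin.val_sub_add_val_eq_or z y
  have := x.isLt; have := y.isLt; have := z.isLt
  omega

lemma cycleGraph_exists_isPath_le_edist [NeZero n] (u : Fin n) {m c : ℕ} (hc : 0 < c)
    (h : m + 2 * c ≤ n) : ∃ p : (cycleGraph n).Walk u (u + m), p.IsPath ∧
      ∀ w ∈ p.support, (c : ℕ∞) ≤ (cycleGraph n).edist (u + m + c) w := by
  obtain ⟨p, -, hsupp⟩ := cycleGraph_exists_walk_add (by omega) u m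
  refine ⟨p.bypass, p.bypass_isPath, fun w hw => ?_⟩
  obtain ⟨i, hi, rfl⟩ := hsupp w (p.support_bypass_subset_support hw)
  have hsub : u + m + c - (u + i) = ((m + c - i : ℕ) : Fin n) := by
    have hi' : m + c = (m + c - i) + i := by omega
    rw [add_assoc, ← Nat.cast_add, hi', Nat.cast_add, Nat.add_sub_cancel]
    abel
  have hval : (u + m + c - (u + i)).val = m + c - i := by
    rw [hsub, Fin.val_cast_of_lt (by omega)]
  rw [SimpleGraph.edist_comm]
  exact le_cycleGraph_edist (by omega) (by omega)

end CycleGraph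

open Fin.NatCast in
lemma exists_isKAT_cycleGraph_three_mul {k : ℕ} (hk : 0 < k) :
    ∃ x y z : Fin (3 * k), IsKAT (cycleGraph (3 * k)) (k - 1) x y z := by
  have : NeZero (3 * k) := ⟨by omega⟩
  have arc {u v w : Fin (3 * k)} (hv : u + k = v) (hw : v + k = w) :
      ∃ p : (cycleGraph (3 * k)).Walk u v, p.IsPath ∧
        ∀ w' ∈ p.support, ((k - 1 : ℕ) : ℕ∞) < (cycleGraph (3 * k)).edist w w' := by
    subst hv hw
    obtain ⟨p, hp, hfar⟩ := cycleGraph_exists_isPath_le_edist u hk (m := k) (by omega)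
    exact ⟨p, hp, fun x hx => (Nat.cast_lt.mpr (Nat.sub_lt hk one_pos)).trans_le (hfar x hx)⟩
  have hcycle : (k : Fin (3 * k)) + k + k = 0 := by
    rw [← Nat.cast_add, ← Nat.cast_add, ← Fin.natCast_self (3 * k)]
    congr 1
    omega
  have hk₁ : (k : Fin (3 * k)).val = k := Fin.val_cast_of_lt (by omega)
  have hk₂ : ((k : Fin (3 * k)) + k).val = 2 * k := by
    rw [Fin.val_add_eq_of_add_lt] <;> omega
  refine ⟨0, k, k + k, Fin.ne_of_val_ne ?_, Fin.ne_of_val_ne ?_, Fin.ne_of_val_ne ?_,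
    arc (zero_add _) rfl, ?_, arc rfl hcycle⟩
  · simp only [Fin.val_zero, hk₁]; omega
  · simp only [hk₁, hk₂]; omega
  · simp only [Fin.val_zero, hk₂]; omega
  · obtain ⟨p, hp, hfar⟩ := arc hcycle (zero_add _)
    exact ⟨p.reverse, hp.reverse, by simpa only [Walk.support_reverse, List.mem_reverse] using hfar⟩

theorem cycle_kAT_general (k : ℕ) :
    (∀ ℓ : ℕ, 3 * k ≤ ℓ → ℓ ≤ 3 * k + 2 →
      ∀ x y z : Fin ℓ, ¬ IsKAT (cycleGraph ℓ) k x y z) ∧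
    (2 ≤ k → ∃ x y z : Fin (3 * k), IsKAT (cycleGraph (3 * k)) (k - 1) x y z) := by
  refine ⟨fun ℓ _ hℓ x y z h => ?_, fun hk => exists_isKAT_cycleGraph_three_mul (by omega)⟩
  obtain ⟨-, -, -, ⟨p, -, hp⟩, ⟨q, -, hq⟩, -⟩ := h
  have := three_mul_add_three_le_of_lt_edist (hp y p.end_mem_support)
    (hp x p.start_mem_support) (hq x q.start_mem_support)
  omega

/-- For every `k ≥ 1`, the cycle `C_ℓ` with `3k ≤ ℓ ≤ 3k+2` is `k`-AT-free, and for
`k ≥ 2` the cycle `C_{3k}` contains a `(k-1)`-asteroidal triple. -/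
theorem cycle_kAT (k : ℕ) (hk : 1 ≤ k) :
    (∀ ℓ : ℕ, 3 * k ≤ ℓ → ℓ ≤ 3 * k + 2 →
      ∀ x y z : Fin ℓ, ¬ IsKAT (cycleGraph ℓ) k x y z) ∧
    (2 ≤ k → ∃ x y z : Fin (3 * k), IsKAT (cycleGraph (3 * k)) (k - 1) x y z) :=
  cycle_kAT_general k
end

section
/- If a graph G has the partially augmented consecutive ones property (*-C1P), then G contains no 2-asteroidal triple. -/
open SimpleGraph

/-- The image under `μ` of `S` is a set of consecutive values among the images of
all vertices: `S` is an interval in the total order induced by `μ`. -/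
def ConsecAmong {V : Type*} (μ : V → ℤ) (S : Set V) : Prop :=
  ∀ a ∈ S, ∀ b ∈ S, ∀ c : V, μ a ≤ μ c → μ c ≤ μ b → c ∈ S

/-- `G` has the partially augmented consecutive ones property (*-C1P): there is an
injective ordering of the vertices into `ℤ` such that, for every vertex, either its
open or its closed neighborhood is consecutive in the ordering. -/
def StarC1P {V : Type*} (G : SimpleGraph V) : Prop :=
  ∃ μ : V → ℤ, Function.Injective μ ∧
    ∀ v : V, ConsecAmong μ (G.neighborSet v) ∨ ConsecAmong μ (insert v (G.neighborSet v))

/-- A `2`-asteroidal triple. -/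
def Is2AT {V : Type*} (G : SimpleGraph V) (x y z : V) : Prop :=
  x ≠ y ∧ y ≠ z ∧ x ≠ z ∧
  (∃ p : G.Walk x y, p.IsPath ∧ ∀ w ∈ p.support, (2 : ℕ∞) < G.edist z w) ∧
  (∃ p : G.Walk x z, p.IsPath ∧ ∀ w ∈ p.support, (2 : ℕ∞) < G.edist y w) ∧
  (∃ p : G.Walk y z, p.IsPath ∧ ∀ w ∈ p.support, (2 : ℕ∞) < G.edist x w)

namespace StarC1PAux

variable {V : Type*} {G : SimpleGraph V}

lemma consec_neg {μ : V → ℤ} {S : Set V} (h : ConsecAmong μ S) :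
    ConsecAmong (fun v => -μ v) S := by
  intro a ha b hb c h1 h2
  have h1' : -μ a ≤ -μ c := h1
  have h2' : -μ c ≤ -μ b := h2
  exact h b hb a ha c (by linarith) (by linarith)

lemma adj_edist_le_one {u v : V} (h : G.Adj u v) : G.edist u v ≤ 1 := by
  have := SimpleGraph.edist_le (SimpleGraph.Walk.cons h SimpleGraph.Walk.nil)
  simpa using this

/-- If `v` is within distance 1 of `c` and `w` is at distance `> 2` from `c`,
then `v ≠ w` and `v` is not adjacent to `w`. -/
lemma block {c v w : V} (hv : G.edist c v ≤ 1) (hw : (2 : ℕ∞) < G.edist c w) :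
    v ≠ w ∧ ¬ G.Adj v w := by
  constructor
  · rintro rfl
    exact absurd hv (by intro h; exact absurd (lt_of_lt_of_le hw h) (by norm_num))
  · intro hadj
    have h2 : G.edist c w ≤ G.edist c v + G.edist v w := SimpleGraph.edist_triangle
    have h3 : G.edist v w ≤ 1 := adj_edist_le_one hadj
    have h4 : G.edist c w ≤ 2 := le_trans h2 (by
      calc G.edist c v + G.edist v w ≤ 1 + 1 := add_le_add hv h3
      _ = 2 := by norm_num)
    exact absurd (lt_of_lt_of_le hw h4) (by norm_num)

section WithMu

variable (μ : V → ℤ) (hinj : Function.Injective μ)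
  (hcons : ∀ v : V, ConsecAmong μ (G.neighborSet v) ∨
      ConsecAmong μ (insert v (G.neighborSet v)))

include hcons in
lemma sandwich {m a b v : V} (ha : G.Adj m a) (hb : G.Adj m b)
    (h1 : μ a ≤ μ v) (h2 : μ v ≤ μ b) : v = m ∨ G.Adj m v := by
  rcases hcons m with hc | hc
  · have := hc a (by simpa using ha) b (by simpa using hb) v h1 h2
    right; simpa using this
  · have := hc a (Set.mem_insert_of_mem _ (by simpa using ha))
      b (Set.mem_insert_of_mem _ (by simpa using hb)) v h1 h2
    rcases this with h | h
    · exact Or.inl h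
    · right; simpa using h

include hcons in
/-- If `m` is at distance `> 2` from `c`, then all neighbors of `m` are on
the same side of `μ c`. -/
lemma same_side {c m a b : V} (hm : (2 : ℕ∞) < G.edist c m)
    (ha : G.Adj m a) (hb : G.Adj m b) : (μ a < μ c ↔ μ b < μ c) := by
  have hc1 : G.edist c c ≤ 1 := by simp [SimpleGraph.edist_self]
  have key : ∀ a' b' : V, G.Adj m a' → G.Adj m b' → μ a' < μ c → μ b' < μ c := by
    intro a' b' ha' hb' hlt
    by_contra hge
    have hle : μ c ≤ μ b' := le_of_not_gt hge
    rcases sandwich μ hcons ha' hb' (le_of_lt hlt) hle with h | h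
    · subst h
      simp [SimpleGraph.edist_self] at hm
    · exact absurd (lt_of_lt_of_le hm (adj_edist_le_one h.symm)) (by norm_num)
  exact ⟨fun h => key a b ha hb h, fun h => key b a hb ha h⟩

variable {a b c v : V} (w : G.Walk a b)
  (hfar : ∀ x ∈ w.support, (2 : ℕ∞) < G.edist c x)
  (hv : G.edist c v ≤ 1)

lemma getVert_mem {i : ℕ} (hi : i ≤ w.length) : w.getVert i ∈ w.support :=
  SimpleGraph.Walk.mem_support_iff_exists_getVert.mpr ⟨i, rfl, hi⟩

include hinj hfar hv in
lemma ne_of_far {i : ℕ} (hi : i ≤ w.length) : μ (w.getVert i) ≠ μ v := by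
  intro h
  have := (block hv (hfar _ (getVert_mem w hi))).1
  exact this (hinj h).symm

include hinj hcons hfar hv in
lemma step {i : ℕ} (hi : i + 2 ≤ w.length) :
    (μ (w.getVert i) < μ v ↔ μ (w.getVert (i + 2)) < μ v) := by
  have h1 : i < w.length := by omega
  have h2 : i + 1 < w.length := by omega
  have ha : G.Adj (w.getVert (i + 1)) (w.getVert i) := (w.adj_getVert_succ h1).symm
  have hb : G.Adj (w.getVert (i + 1)) (w.getVert (i + 2)) := by
    have := w.adj_getVert_succ h2
    convert this using 2
  have hm := hfar _ (getVert_mem w (by omega : i + 1 ≤ w.length))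
  have hblock := block hv hm
  have key : ∀ s t : V, G.Adj (w.getVert (i+1)) s → G.Adj (w.getVert (i+1)) t →
      μ s < μ v → μ t ≠ μ v → μ t < μ v := by
    intro s t hs ht hslt htne
    by_contra hge
    have : μ v ≤ μ t := le_of_not_gt fun hh => hge hh
    rcases sandwich μ hcons hs ht (le_of_lt hslt) this with h | h
    · exact hblock.1 h
    · exact hblock.2 h.symm
  have hne2 : μ (w.getVert (i + 2)) ≠ μ v := ne_of_far μ hinj w hfar hv (by omega)
  have hne0 : μ (w.getVert i) ≠ μ v := ne_of_far μ hinj w hfar hv (by omega)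
  exact ⟨fun h => key _ _ ha hb h hne2, fun h => key _ _ hb ha h hne0⟩

include hinj hcons hfar hv in
lemma parity2 : ∀ d i : ℕ, i + 2 * d ≤ w.length →
    (μ (w.getVert i) < μ v ↔ μ (w.getVert (i + 2 * d)) < μ v) := by
  intro d
  induction d with
  | zero => intro i _; simp
  | succ d ih =>
    intro i hle
    have h1 : i + 2 ≤ w.length := by omega
    have h2 : (i + 2) + 2 * d ≤ w.length := by omega
    rw [show i + 2 * (d + 1) = (i + 2) + 2 * d by omega]
    exact (step μ hinj hcons w hfar hv h1).trans (ih (i + 2) h2)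

include hinj hcons hfar hv in
lemma cross (h0 : μ a < μ v) (hn : μ v < μ b) :
    μ v < μ (w.getVert 1) ∧ μ (w.getVert (w.length - 1)) < μ v := by
  have hS0 : μ (w.getVert 0) < μ v := by rwa [w.getVert_zero]
  have hSn : ¬ μ (w.getVert w.length) < μ v := by
    rw [w.getVert_length]; exact fun h => absurd hn (not_lt_of_gt h)
  have hodd : ¬ ∃ d, w.length = 2 * d := by
    rintro ⟨d, hd⟩
    have := parity2 μ hinj hcons w hfar hv d 0 (by omega)
    rw [show 0 + 2 * d = w.length by omega] at this
    exact hSn (this.mp hS0)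
  obtain ⟨d, hd⟩ : ∃ d, w.length = 2 * d + 1 := by
    rcases Nat.even_or_odd w.length with ⟨d, hd⟩ | ⟨d, hd⟩
    · exact absurd ⟨d, by omega⟩ hodd
    · exact ⟨d, by omega⟩
  constructor
  · have := parity2 μ hinj hcons w hfar hv d 1 (by omega)
    rw [show 1 + 2 * d = w.length by omega] at this
    have hne : μ (w.getVert 1) ≠ μ v := ne_of_far μ hinj w hfar hv (by omega)
    rcases lt_trichotomy (μ v) (μ (w.getVert 1)) with h | h | h
    · exact h
    · exact absurd h.symm hne
    · exact absurd (this.mp h) hSn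
  · have := parity2 μ hinj hcons w hfar hv d 0 (by omega)
    rw [show 0 + 2 * d = w.length - 1 by omega] at this
    exact this.mp hS0

include hinj hcons hfar hv in
lemma transfer (h0 : μ a < μ v) (hn : μ b < μ v) :
    (μ (w.getVert 1) < μ v ↔ μ (w.getVert (w.length - 1)) < μ v) := by
  rcases Nat.even_or_odd w.length with ⟨d, hd⟩ | ⟨d, hd⟩
  · rcases Nat.eq_zero_or_pos d with rfl | hdpos
    · have hlen : w.length = 0 := by omega
      have e1 : w.getVert 1 = b := w.getVert_of_length_le (by omega)
      have e2 : w.getVert (w.length - 1) = a := by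
        rw [show w.length - 1 = 0 by omega, w.getVert_zero]
      rw [e1, e2]
      exact iff_of_true hn h0
    · have := parity2 μ hinj hcons w hfar hv (d - 1) 1 (by omega)
      rw [show 1 + 2 * (d - 1) = w.length - 1 by omega] at this
      exact this
  · have hlen : w.length = 2 * d + 1 := by omega
    have t1 := parity2 μ hinj hcons w hfar hv d 1 (by omega)
    rw [show 1 + 2 * d = w.length by omega, w.getVert_length] at t1
    have t0 := parity2 μ hinj hcons w hfar hv d 0 (by omega)
    rw [show 0 + 2 * d = w.length - 1 by omega, w.getVert_zero] at t0
    exact iff_of_true (t1.mpr hn) (t0.mp h0)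

end WithMu

lemma length_pos_of_ne {a b : V} (w : G.Walk a b) (h : a ≠ b) : 0 < w.length := by
  cases w with
  | nil => exact absurd rfl h
  | cons h p => simp

/-- The core argument: assuming `μ x < μ z < μ y`, a 2-AT `(x, y, z)` is impossible. -/
lemma core (μ : V → ℤ) (hinj : Function.Injective μ)
    (hcons : ∀ v : V, ConsecAmong μ (G.neighborSet v) ∨
      ConsecAmong μ (insert v (G.neighborSet v)))
    {x y z : V} (hAT : Is2AT G x y z) (h1 : μ x < μ z) (h2 : μ z < μ y) : False := by
  obtain ⟨hxy, hyz, hxz, ⟨p, hp, hpz⟩, ⟨q, hq, hqy⟩, ⟨r, hr, hrx⟩⟩ := hAT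
  -- pairwise far facts
  have hfzx : (2 : ℕ∞) < G.edist z x := hpz x p.start_mem_support
  have hfzy : (2 : ℕ∞) < G.edist z y := hpz y p.end_mem_support
  have hfyx : (2 : ℕ∞) < G.edist y x := hqy x q.start_mem_support
  have hfyz : (2 : ℕ∞) < G.edist y z := hqy z q.end_mem_support
  have hfxy : (2 : ℕ∞) < G.edist x y := hrx y r.start_mem_support
  have hfxz : (2 : ℕ∞) < G.edist x z := hrx z r.end_mem_support
  -- lengths
  have hp1 : 0 < p.length := length_pos_of_ne p hxy
  have hq1 : 0 < q.length := length_pos_of_ne q hxz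
  have hr1 : 0 < r.length := length_pos_of_ne r hyz
  -- vertices
  set u := p.getVert (p.length - 1) with hu_def
  set u' := p.getVert 1 with hu'_def
  set s := q.getVert (q.length - 1) with hs_def
  set q1 := q.getVert 1 with hq1_def
  set t := r.getVert (r.length - 1) with ht_def
  set r1 := r.getVert 1 with hr1_def
  -- adjacencies
  have hadj_uy : G.Adj u y := by
    have := p.adj_getVert_succ (show p.length - 1 < p.length by omega)
    rwa [show p.length - 1 + 1 = p.length by omega, p.getVert_length] at this
  have hadj_xu' : G.Adj x u' := by
    have := p.adj_getVert_succ hp1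
    rwa [p.getVert_zero] at this
  have hadj_sz : G.Adj s z := by
    have := q.adj_getVert_succ (show q.length - 1 < q.length by omega)
    rwa [show q.length - 1 + 1 = q.length by omega, q.getVert_length] at this
  have hadj_xq1 : G.Adj x q1 := by
    have := q.adj_getVert_succ hq1
    rwa [q.getVert_zero] at this
  have hadj_tz : G.Adj t z := by
    have := r.adj_getVert_succ (show r.length - 1 < r.length by omega)
    rwa [show r.length - 1 + 1 = r.length by omega, r.getVert_length] at this
  have hadj_yr1 : G.Adj y r1 := by
    have := r.adj_getVert_succ hr1
    rwa [r.getVert_zero] at this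
  -- the negated ordering
  set ν : V → ℤ := fun v => -μ v with hν_def
  have hinjν : Function.Injective ν := fun a b hab => hinj (by
    have : -μ a = -μ b := hab
    linarith)
  have hconsν : ∀ v : V, ConsecAmong ν (G.neighborSet v) ∨
      ConsecAmong ν (insert v (G.neighborSet v)) := by
    intro v
    rcases hcons v with h | h
    · exact Or.inl (consec_neg h)
    · exact Or.inr (consec_neg h)
  -- distance-1 facts
  have hnzz : G.edist z z ≤ 1 := by simp [SimpleGraph.edist_self]
  have hnyy : G.edist y y ≤ 1 := by simp [SimpleGraph.edist_self]
  have hnxx : G.edist x x ≤ 1 := by simp [SimpleGraph.edist_self]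
  have hnyu : G.edist y u ≤ 1 := adj_edist_le_one hadj_uy.symm
  have hnzs : G.edist z s ≤ 1 := adj_edist_le_one hadj_sz.symm
  have hnxu' : G.edist x u' ≤ 1 := adj_edist_le_one hadj_xu'
  -- cross on p with v = z : μ z < μ u' and μ u < μ z
  have crossP := cross μ hinj hcons p hpz hnzz h1 h2
  have hu_z : μ u < μ z := crossP.2
  have hz_u' : μ z < μ u' := crossP.1
  -- main case analysis on μ s vs μ x
  rcases lt_trichotomy (μ s) (μ x) with hsx | hsx | hsx
  · -- case μ s < μ x
    have hsy : μ s < μ y := by linarith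
    -- transfer on q w.r.t. y : (μ q1 < μ y ↔ μ s < μ y)
    have F2 := transfer μ hinj hcons q hqy hnyy (by linarith : μ x < μ y) h2
    have hq1y : μ q1 < μ y := F2.mpr hsy
    -- same_side at x w.r.t. y : (μ u' < μ y ↔ μ q1 < μ y)
    have F6 := same_side μ hcons (c := y) hfyx hadj_xu' hadj_xq1
    have hu'y : μ u' < μ y := F6.mpr hq1y
    -- cross (ν) on r with v = u' (near x):
    have crossR := cross ν hinjν hconsν r hrx hnxu'
      (show ν y < ν u' by simp only [hν_def]; linarith)
      (show ν u' < ν z by simp only [hν_def]; linarith)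
    have hu't : μ u' < μ t := by
      have := crossR.2
      simp only [hν_def] at this
      linarith
    -- same_side at z w.r.t. x : (μ s < μ x ↔ μ t < μ x)
    have F4 := same_side μ hcons (c := x) hfxz hadj_sz.symm hadj_tz.symm
    have htx : μ t < μ x := F4.mp hsx
    linarith
  · -- case μ s = μ x : s = x, contradiction with Adj s z
    have : s = x := hinj hsx
    rw [this] at hadj_sz
    exact absurd (lt_of_lt_of_le hfxz (adj_edist_le_one hadj_sz)) (by norm_num)
  · -- case μ x < μ s
    -- same_side at z w.r.t. x : ¬ (μ t < μ x)
    have F4 := same_side μ hcons (c := x) hfxz hadj_sz.symm hadj_tz.symm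
    have htx : ¬ μ t < μ x := fun hh => absurd (F4.mpr hh) (not_lt_of_gt hsx)
    have htnex : μ t ≠ μ x := by
      intro hh
      have : t = x := hinj hh
      rw [this] at hadj_tz
      exact absurd (lt_of_lt_of_le hfxz (adj_edist_le_one hadj_tz)) (by norm_num)
    have hxt : μ x < μ t := lt_of_le_of_ne (le_of_not_gt htx) (Ne.symm htnex)
    -- transfer (ν) on r w.r.t. x : (x < r1 ↔ x < t)
    have F3 := transfer ν hinjν hconsν r hrx hnxx
      (show ν y < ν x by simp only [hν_def]; linarith)
      (show ν z < ν x by simp only [hν_def]; linarith)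
    have hxr1 : μ x < μ r1 := by
      have h' : ν t < ν x := by simp only [hν_def]; linarith
      have := F3.mpr h'
      simp only [hν_def] at this
      linarith
    -- same_side at y w.r.t. x : (μ u < μ x ↔ μ r1 < μ x)
    have F5 := same_side μ hcons (c := x) hfxy hadj_uy.symm hadj_yr1
    have hux : ¬ μ u < μ x := fun hh => absurd (F5.mp hh) (not_lt_of_gt hxr1)
    have hunex : μ u ≠ μ x := by
      intro hh
      have : u = x := hinj hh
      rw [this] at hadj_uy
      exact absurd (lt_of_lt_of_le hfxy (adj_edist_le_one hadj_uy)) (by norm_num)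
    have hxu : μ x < μ u := lt_of_le_of_ne (le_of_not_gt hux) (Ne.symm hunex)
    -- cross on q with v = u (near y): penultimate s satisfies μ s < μ u
    have crossQ := cross μ hinj hcons q hqy hnyu hxu hu_z
    have hsu : μ s < μ u := crossQ.2
    -- cross on p with v = s (near z): penultimate u satisfies μ u < μ s
    have crossP2 := cross μ hinj hcons p hpz hnzs hsx (by linarith : μ s < μ y)
    have hus : μ u < μ s := crossP2.2
    linarith

lemma swap12 {x y z : V} (h : Is2AT G x y z) : Is2AT G y x z := by
  obtain ⟨hxy, hyz, hxz, ⟨p, hp, hpz⟩, ⟨q, hq, hqy⟩, ⟨r, hr, hrx⟩⟩ := h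
  refine ⟨hxy.symm, hxz, hyz, ⟨p.reverse, hp.reverse, ?_⟩, ⟨r, hr, hrx⟩, ⟨q, hq, hqy⟩⟩
  intro w hw
  apply hpz
  rwa [SimpleGraph.Walk.support_reverse, List.mem_reverse] at hw

lemma swap23 {x y z : V} (h : Is2AT G x y z) : Is2AT G x z y := by
  obtain ⟨hxy, hyz, hxz, ⟨p, hp, hpz⟩, ⟨q, hq, hqy⟩, ⟨r, hr, hrx⟩⟩ := h
  refine ⟨hxz, hyz.symm, hxy, ⟨q, hq, hqy⟩, ⟨p, hp, hpz⟩, ⟨r.reverse, hr.reverse, ?_⟩⟩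
  intro w hw
  apply hrx
  rwa [SimpleGraph.Walk.support_reverse, List.mem_reverse] at hw

end StarC1PAux

/-- If a graph has the *-C1P then it contains no `2`-asteroidal triple. -/
theorem starC1P_no_2AT {V : Type*} (G : SimpleGraph V) (h : StarC1P G) :
    ∀ x y z : V, ¬ Is2AT G x y z := by
  intro x y z hAT
  obtain ⟨μ, hinj, hcons⟩ := h
  have hxy := hAT.1
  have hyz := hAT.2.1
  have hxz := hAT.2.2.1
  have hμxy : μ x ≠ μ y := fun hh => hxy (hinj hh)
  have hμyz : μ y ≠ μ z := fun hh => hyz (hinj hh)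
  have hμxz : μ x ≠ μ z := fun hh => hxz (hinj hh)
  rcases lt_trichotomy (μ x) (μ y) with h1 | h1 | h1
  · rcases lt_trichotomy (μ x) (μ z) with h2 | h2 | h2
    · rcases lt_trichotomy (μ y) (μ z) with h3 | h3 | h3
      · -- x < y < z : middle y : Is2AT x z y
        exact StarC1PAux.core μ hinj hcons (StarC1PAux.swap23 hAT) h1 h3
      · exact absurd h3 hμyz
      · -- x < z < y : middle z
        exact StarC1PAux.core μ hinj hcons hAT h2 h3
    · exact absurd h2 hμxz
    · -- z < x < y : middle x : Is2AT z y x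
      exact StarC1PAux.core μ hinj hcons
        (StarC1PAux.swap12 (StarC1PAux.swap23 (StarC1PAux.swap12 hAT))) h2 h1
  · exact absurd h1 hμxy
  · rcases lt_trichotomy (μ y) (μ z) with h2 | h2 | h2
    · rcases lt_trichotomy (μ x) (μ z) with h3 | h3 | h3
      · -- y < x < z : middle x : Is2AT y z x
        exact StarC1PAux.core μ hinj hcons (StarC1PAux.swap23 (StarC1PAux.swap12 hAT)) h1 h3
      · exact absurd h3 hμxz
      · -- y < z < x : middle z : Is2AT y x z
        exact StarC1PAux.core μ hinj hcons (StarC1PAux.swap12 hAT) h2 h3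
    · exact absurd h2 hμyz
    · -- z < y < x : middle y : Is2AT z x y
      exact StarC1PAux.core μ hinj hcons
        (StarC1PAux.swap12 (StarC1PAux.swap23 hAT)) h2 h1
end

section
/- Let G be a graph with the *-C1P witnessed by ordering ≼, and let P = z_0 z_1 … z_ℓ be an induced path in G. Then the sequence (z_0, z_2, z_4, …) of even-indexed vertices is monotonic with respect to ≼, and likewise the sequence (z_ℓ, z_{ℓ−2}, z_{ℓ−4}, …) is monotonic with respect to ≼. -/
open SimpleGraph

/-- `z 0, z 1, …, z ℓ` is an induced path of `G`: the vertices are distinct and two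
of them are adjacent iff their indices differ by exactly one. -/
def IsInducedPath {V : Type*} (G : SimpleGraph V) (ℓ : ℕ) (z : ℕ → V) : Prop :=
  (∀ i j, i ≤ ℓ → j ≤ ℓ → z i = z j → i = j) ∧
  (∀ i j, i ≤ ℓ → j ≤ ℓ → (G.Adj (z i) (z j) ↔ (i = j + 1 ∨ j = i + 1)))

/-- Between two neighbors of `v`, every vertex is `v` or a neighbor of `v`. -/
lemma between_mem {V : Type*} {G : SimpleGraph V} {μ : V → ℤ} {v a b c : V}
    (hμv : ConsecAmong μ (G.neighborSet v) ∨ ConsecAmong μ (insert v (G.neighborSet v)))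
    (ha : G.Adj v a) (hb : G.Adj v b) (h1 : μ a ≤ μ c) (h2 : μ c ≤ μ b) :
    c = v ∨ G.Adj v c := by
  rcases hμv with h | h
  · right
    have := h a ha b hb c h1 h2
    exact this
  · have := h a (Set.mem_insert_of_mem _ ha) b (Set.mem_insert_of_mem _ hb) c h1 h2
    rcases this with h' | h'
    · exact Or.inl h'
    · exact Or.inr h'

section Step

variable {V : Type*} {G : SimpleGraph V} {μ : V → ℤ}
  (hinj : Function.Injective μ)
  (hμ : ∀ v : V, ConsecAmong μ (G.neighborSet v) ∨
      ConsecAmong μ (insert v (G.neighborSet v)))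
  {ℓ : ℕ} {z : ℕ → V} (hz : IsInducedPath G ℓ z)

include hinj hμ hz

lemma notmid_top {k : ℕ} (hk : k + 4 ≤ ℓ)
    (h1 : μ (z k) < μ (z (k + 2))) (h2 : μ (z (k + 4)) < μ (z (k + 2))) : False := by
  obtain ⟨hzi, hadj⟩ := hz
  have adj0 : G.Adj (z (k+1)) (z k) := by
    rw [hadj (k+1) k (by omega) (by omega)]; omega
  have adj2 : G.Adj (z (k+1)) (z (k+2)) := by
    rw [hadj (k+1) (k+2) (by omega) (by omega)]; omega
  have adj2' : G.Adj (z (k+3)) (z (k+2)) := by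
    rw [hadj (k+3) (k+2) (by omega) (by omega)]; omega
  have adj4 : G.Adj (z (k+3)) (z (k+4)) := by
    rw [hadj (k+3) (k+4) (by omega) (by omega)]; omega
  rcases le_total (μ (z k)) (μ (z (k+4))) with hle | hle
  · rcases between_mem (hμ (z (k+1))) adj0 adj2 hle h2.le with he | he
    · exact absurd (hzi (k+4) (k+1) (by omega) (by omega) he) (by omega)
    · rw [hadj (k+1) (k+4) (by omega) (by omega)] at he; omega
  · rcases between_mem (hμ (z (k+3))) adj4 adj2' hle h1.le with he | he
    · exact absurd (hzi k (k+3) (by omega) (by omega) he) (by omega)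
    · rw [hadj (k+3) k (by omega) (by omega)] at he; omega

lemma notmid_bot {k : ℕ} (hk : k + 4 ≤ ℓ)
    (h1 : μ (z (k + 2)) < μ (z k)) (h2 : μ (z (k + 2)) < μ (z (k + 4))) : False := by
  obtain ⟨hzi, hadj⟩ := hz
  have adj0 : G.Adj (z (k+1)) (z k) := by
    rw [hadj (k+1) k (by omega) (by omega)]; omega
  have adj2 : G.Adj (z (k+1)) (z (k+2)) := by
    rw [hadj (k+1) (k+2) (by omega) (by omega)]; omega
  have adj2' : G.Adj (z (k+3)) (z (k+2)) := by
    rw [hadj (k+3) (k+2) (by omega) (by omega)]; omega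
  have adj4 : G.Adj (z (k+3)) (z (k+4)) := by
    rw [hadj (k+3) (k+4) (by omega) (by omega)]; omega
  rcases le_total (μ (z (k+4))) (μ (z k)) with hle | hle
  · rcases between_mem (hμ (z (k+1))) adj2 adj0 h2.le hle with he | he
    · exact absurd (hzi (k+4) (k+1) (by omega) (by omega) he) (by omega)
    · rw [hadj (k+1) (k+4) (by omega) (by omega)] at he; omega
  · rcases between_mem (hμ (z (k+3))) adj2' adj4 h1.le hle with he | he
    · exact absurd (hzi k (k+3) (by omega) (by omega) he) (by omega)
    · rw [hadj (k+3) k (by omega) (by omega)] at he; omega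

lemma step_up {k : ℕ} (hk : k + 4 ≤ ℓ)
    (h : μ (z k) < μ (z (k + 2))) : μ (z (k + 2)) < μ (z (k + 4)) := by
  by_contra hc
  have hne : μ (z (k+2)) ≠ μ (z (k+4)) := fun he =>
    absurd (hz.1 (k+2) (k+4) (by omega) (by omega) (hinj he)) (by omega)
  exact notmid_top hinj hμ hz hk h (lt_of_le_of_ne (not_lt.mp hc) hne.symm)

lemma step_down {k : ℕ} (hk : k + 4 ≤ ℓ)
    (h : μ (z (k + 2)) < μ (z k)) : μ (z (k + 4)) < μ (z (k + 2)) := by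
  by_contra hc
  have hne : μ (z (k+2)) ≠ μ (z (k+4)) := fun he =>
    absurd (hz.1 (k+2) (k+4) (by omega) (by omega) (hinj he)) (by omega)
  exact notmid_bot hinj hμ hz hk h (lt_of_le_of_ne (not_lt.mp hc) hne)

lemma even_mono :
    (∀ i j : ℕ, i ≤ j → 2 * j ≤ ℓ → μ (z (2 * i)) ≤ μ (z (2 * j))) ∨
    (∀ i j : ℕ, i ≤ j → 2 * j ≤ ℓ → μ (z (2 * j)) ≤ μ (z (2 * i))) := by
  by_cases hℓ : ℓ < 2
  · left
    intro i j hij hj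
    have : j = 0 := by omega
    have : i = 0 := by omega
    subst ‹j = 0›; subst this
    exact le_refl _
  · push_neg at hℓ
    have hne : μ (z 0) ≠ μ (z 2) := fun he =>
      absurd (hz.1 0 2 (by omega) (by omega) (hinj he)) (by omega)
    rcases hne.lt_or_gt with h02 | h02
    · left
      have aux : ∀ i : ℕ, 2 * i + 2 ≤ ℓ → μ (z (2 * i)) < μ (z (2 * i + 2)) := by
        intro i
        induction i with
        | zero => intro _; simpa using h02
        | succ n ih =>
          intro hb
          have h1 : 2 * n + 4 ≤ ℓ := by omega
          have h2 := step_up hinj hμ hz h1 (ih (by omega))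
          have e1 : 2 * (n + 1) = 2 * n + 2 := by ring
          have e2 : 2 * n + 2 + 2 = 2 * n + 4 := by omega
          rw [e1, e2]
          exact h2
      have chain : ∀ d i : ℕ, 2 * (i + d) ≤ ℓ → μ (z (2 * i)) ≤ μ (z (2 * (i + d))) := by
        intro d
        induction d with
        | zero => intro i _; simp
        | succ n ih =>
          intro i hb
          have h1 := ih i (by omega)
          have h2 := aux (i + n) (by omega)
          have e : 2 * (i + (n + 1)) = 2 * (i + n) + 2 := by ring
          rw [e]
          exact h1.trans h2.le
      intro i j hij hj
      obtain ⟨d, rfl⟩ := Nat.exists_eq_add_of_le hij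
      exact chain d i hj
    · right
      have aux : ∀ i : ℕ, 2 * i + 2 ≤ ℓ → μ (z (2 * i + 2)) < μ (z (2 * i)) := by
        intro i
        induction i with
        | zero => intro _; simpa using h02
        | succ n ih =>
          intro hb
          have h1 : 2 * n + 4 ≤ ℓ := by omega
          have h2 := step_down hinj hμ hz h1 (ih (by omega))
          have e1 : 2 * (n + 1) = 2 * n + 2 := by ring
          have e2 : 2 * n + 2 + 2 = 2 * n + 4 := by omega
          rw [e1, e2]
          exact h2
      have chain : ∀ d i : ℕ, 2 * (i + d) ≤ ℓ → μ (z (2 * (i + d))) ≤ μ (z (2 * i)) := by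
        intro d
        induction d with
        | zero => intro i _; simp
        | succ n ih =>
          intro i hb
          have h1 := ih i (by omega)
          have h2 := aux (i + n) (by omega)
          have e : 2 * (i + (n + 1)) = 2 * (i + n) + 2 := by ring
          rw [e]
          exact (h2.le).trans h1
      intro i j hij hj
      obtain ⟨d, rfl⟩ := Nat.exists_eq_add_of_le hij
      exact chain d i hj

end Step

/-- In a graph with the *-C1P (witnessed by `μ`), along any induced path
`z 0 … z ℓ`, the sequence of even-indexed vertices `z 0, z 2, z 4, …` is monotonic
for the order induced by `μ`, and so is the sequence `z ℓ, z (ℓ-2), z (ℓ-4), …`. -/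
theorem starC1P_inducedPath_monotone {V : Type*} (G : SimpleGraph V) (μ : V → ℤ)
    (hinj : Function.Injective μ)
    (hμ : ∀ v : V, ConsecAmong μ (G.neighborSet v) ∨
      ConsecAmong μ (insert v (G.neighborSet v)))
    (ℓ : ℕ) (z : ℕ → V) (hz : IsInducedPath G ℓ z) :
    ((∀ i j : ℕ, i ≤ j → 2 * j ≤ ℓ → μ (z (2 * i)) ≤ μ (z (2 * j))) ∨
     (∀ i j : ℕ, i ≤ j → 2 * j ≤ ℓ → μ (z (2 * j)) ≤ μ (z (2 * i)))) ∧
    ((∀ i j : ℕ, i ≤ j → 2 * j ≤ ℓ → μ (z (ℓ - 2 * i)) ≤ μ (z (ℓ - 2 * j))) ∨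
     (∀ i j : ℕ, i ≤ j → 2 * j ≤ ℓ → μ (z (ℓ - 2 * j)) ≤ μ (z (ℓ - 2 * i)))) := by
  constructor
  · exact even_mono hinj hμ hz
  · have hw : IsInducedPath G ℓ (fun i => z (ℓ - i)) := by
      constructor
      · intro i j hi hj he
        have := hz.1 (ℓ - i) (ℓ - j) (by omega) (by omega) he
        omega
      · intro i j hi hj
        rw [hz.2 (ℓ - i) (ℓ - j) (by omega) (by omega)]
        omega
    exact even_mono hinj hμ hw
end

section
/- Let G be a graph with the *-C1P witnessed by ordering ≼, and let P = z_0 z_1 … z_ℓ be an induced path of even length ℓ. Then every vertex x of G with z_0 ≼ x ≼ z_ℓ (or z_ℓ ≼ x ≼ z_0) lies in the closed neighborhood N[V(P)] of the path. -/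
open SimpleGraph

/-- In a graph with the *-C1P (witnessed by `μ`), for any induced path
`z 0 … z ℓ` of even length `ℓ`, every vertex lying between the two endpoints in
the order induced by `μ` (in either direction) belongs to the closed neighborhood
of the path. -/
theorem starC1P_evenInducedPath_between {V : Type*} (G : SimpleGraph V) (μ : V → ℤ)
    (hinj : Function.Injective μ)
    (hμ : ∀ v : V, ConsecAmong μ (G.neighborSet v) ∨
      ConsecAmong μ (insert v (G.neighborSet v)))
    (ℓ : ℕ) (hℓ : Even ℓ) (z : ℕ → V) (hz : IsInducedPath G ℓ z)
    (x : V)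
    (hx : (μ (z 0) ≤ μ x ∧ μ x ≤ μ (z ℓ)) ∨ (μ (z ℓ) ≤ μ x ∧ μ x ≤ μ (z 0))) :
    ∃ i ≤ ℓ, x = z i ∨ G.Adj (z i) x := by
  by_contra hcon
  push_neg at hcon
  obtain ⟨_, hadj⟩ := hz
  have hne : ∀ i, i ≤ ℓ → μ x ≠ μ (z i) := fun i hi h =>
    (hcon i hi).1 (hinj h)
  have key : ∀ i, i + 2 ≤ ℓ → (μ (z i) < μ x ↔ μ (z (i + 2)) < μ x) := by
    intro i hi
    have h1 : z i ∈ G.neighborSet (z (i + 1)) :=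
      (hadj (i + 1) i (by omega) (by omega)).mpr (Or.inl rfl)
    have h2 : z (i + 2) ∈ G.neighborSet (z (i + 1)) :=
      (hadj (i + 1) (i + 2) (by omega) hi).mpr (Or.inr rfl)
    have hxn : x ∉ G.neighborSet (z (i + 1)) := (hcon (i + 1) (by omega)).2
    have hnb1 : ¬(μ (z i) ≤ μ x ∧ μ x ≤ μ (z (i + 2))) := by
      rintro ⟨ha, hb⟩
      rcases hμ (z (i + 1)) with hc | hc
      · exact hxn (hc _ h1 _ h2 x ha hb)
      · rcases hc _ (Set.mem_insert_of_mem _ h1) _ (Set.mem_insert_of_mem _ h2) x ha hb with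
          h | h
        · exact (hcon (i + 1) (by omega)).1 h
        · exact hxn h
    have hnb2 : ¬(μ (z (i + 2)) ≤ μ x ∧ μ x ≤ μ (z i)) := by
      rintro ⟨ha, hb⟩
      rcases hμ (z (i + 1)) with hc | hc
      · exact hxn (hc _ h2 _ h1 x ha hb)
      · rcases hc _ (Set.mem_insert_of_mem _ h2) _ (Set.mem_insert_of_mem _ h1) x ha hb with
          h | h
        · exact (hcon (i + 1) (by omega)).1 h
        · exact hxn h
    have e1 := hne i (by omega)
    have e2 := hne (i + 2) hi
    omega
  have main : ∀ k, 2 * k ≤ ℓ → (μ (z 0) < μ x ↔ μ (z (2 * k)) < μ x) := by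
    intro k
    induction k with
    | zero => simp
    | succ n ih =>
      intro hk
      have h2n : 2 * n + 2 = 2 * (n + 1) := by ring
      have := key (2 * n) (by omega)
      rw [h2n] at this
      exact (ih (by omega)).trans this
  obtain ⟨m, hm⟩ := hℓ
  have hml : 2 * m = ℓ := by omega
  have hfin := main m (by omega)
  rw [hml] at hfin
  have e0 := hne 0 (by omega)
  have el := hne ℓ le_rfl
  omega
end

section
/- If a graph G has the *-C1P, then G contains no induced cycle of length 5 or more (G is C_{≥5}-free). -/
open SimpleGraph

/-- `z 0, …, z (ℓ-1)` is an induced cycle of length `ℓ` in `G`: distinct vertices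
adjacent iff consecutive modulo `ℓ`. -/
def IsInducedCycle {V : Type*} (G : SimpleGraph V) (ℓ : ℕ) (z : ℕ → V) : Prop :=
  (∀ i j, i < ℓ → j < ℓ → z i = z j → i = j) ∧
  (∀ i j, i < ℓ → j < ℓ → (G.Adj (z i) (z j) ↔ ((i + 1) % ℓ = j ∨ (j + 1) % ℓ = i)))

private lemma red_mod (a k ℓ : ℕ) (ha : a < ℓ) (hk : k ≤ ℓ) :
    (a + k) % ℓ = if a + k < ℓ then a + k else a + k - ℓ := by
  split_ifs with h
  · exact Nat.mod_eq_of_lt h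
  · rw [Nat.mod_eq_sub_mod (by omega)]
    exact Nat.mod_eq_of_lt (by omega)

/-- If a graph has the *-C1P then it has no induced cycle of length `5` or more. -/
theorem starC1P_no_long_induced_cycle {V : Type*} (G : SimpleGraph V)
    (h : StarC1P G) (ℓ : ℕ) (hℓ : 5 ≤ ℓ) (z : ℕ → V) :
    ¬ IsInducedCycle G ℓ z := by
  rintro ⟨hz1, hz2⟩
  obtain ⟨μ, hμinj, hμ⟩ := h
  have hℓ0 : 0 < ℓ := by omega
  obtain ⟨a, haR, hmin⟩ := Finset.exists_min_image (Finset.range ℓ) (fun i => μ (z i))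
    ⟨0, Finset.mem_range.mpr hℓ0⟩
  rw [Finset.mem_range] at haR
  have hmin' : ∀ j, j < ℓ → μ (z a) ≤ μ (z j) := fun j hj => hmin j (Finset.mem_range.mpr hj)
  -- Key consequence of *-C1P: a non-neighbor of `z i` cannot lie μ-between two
  -- neighbors of `z i`.
  have L : ∀ i j u w, i < ℓ → j < ℓ → j ≠ i → ¬ G.Adj (z i) (z j) →
      G.Adj (z i) u → G.Adj (z i) w → μ u ≤ μ (z j) → μ (z j) ≤ μ w → False := by
    intro i j u w hi hj hji hnadj hu hw h1 h2
    rcases hμ (z i) with hc | hc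
    · exact hnadj (hc u hu w hw (z j) h1 h2)
    · rcases hc u (Set.mem_insert_of_mem _ hu) w (Set.mem_insert_of_mem _ hw) (z j) h1 h2 with
        heq | hadj
      · exact hji (hz1 j i hj hi heq)
      · exact hnadj hadj
  set p1 := (a + 1) % ℓ with hp1def
  set p2 := (a + 2) % ℓ with hp2def
  set p3 := (a + 3) % ℓ with hp3def
  set m1 := (a + (ℓ - 1)) % ℓ with hm1def
  set m2 := (a + (ℓ - 2)) % ℓ with hm2def
  have hp1 : p1 < ℓ := Nat.mod_lt _ hℓ0
  have hp2 : p2 < ℓ := Nat.mod_lt _ hℓ0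
  have hm1 : m1 < ℓ := Nat.mod_lt _ hℓ0
  have hm2 : m2 < ℓ := Nat.mod_lt _ hℓ0
  -- successor computations
  have e1 : (p1 + 1) % ℓ = p2 := by
    rw [hp1def, hp2def, Nat.mod_add_mod]
  have e2 : (m2 + 1) % ℓ = m1 := by
    rw [hm2def, hm1def, Nat.mod_add_mod]; congr 1; omega
  have e3 : (m1 + 1) % ℓ = a := by
    rw [hm1def, Nat.mod_add_mod]
    have : a + (ℓ - 1) + 1 = a + ℓ := by omega
    rw [this, Nat.add_mod_right]
    exact Nat.mod_eq_of_lt haR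
  have e4 : (p2 + 1) % ℓ = p3 := by
    rw [hp2def, hp3def, Nat.mod_add_mod]
  -- distinctness facts
  have hd1 : p2 ≠ m2 := by
    rw [hp2def, hm2def, red_mod a 2 ℓ haR (by omega), red_mod a (ℓ - 2) ℓ haR (by omega)]
    split_ifs <;> omega
  have hd2 : m1 ≠ p1 := by
    rw [hm1def, hp1def, red_mod a (ℓ - 1) ℓ haR (by omega), red_mod a 1 ℓ haR (by omega)]
    split_ifs <;> omega
  have hd3 : m2 ≠ p1 := by
    rw [hm2def, hp1def, red_mod a (ℓ - 2) ℓ haR (by omega), red_mod a 1 ℓ haR (by omega)]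
    split_ifs <;> omega
  have hd4 : a ≠ p2 := by
    rw [hp2def, red_mod a 2 ℓ haR (by omega)]
    split_ifs <;> omega
  have hd5 : p3 ≠ m1 := by
    rw [hp3def, hm1def, red_mod a 3 ℓ haR (by omega), red_mod a (ℓ - 1) ℓ haR (by omega)]
    split_ifs <;> omega
  have hd6 : p2 ≠ m1 := by
    rw [hp2def, hm1def, red_mod a 2 ℓ haR (by omega), red_mod a (ℓ - 1) ℓ haR (by omega)]
    split_ifs <;> omega
  -- adjacencies along the cycle
  have hadj1 : G.Adj (z p1) (z a) := (hz2 p1 a hp1 haR).mpr (Or.inr rfl)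
  have hadj2 : G.Adj (z p1) (z p2) := (hz2 p1 p2 hp1 hp2).mpr (Or.inl e1)
  have hadj3 : G.Adj (z m1) (z a) := (hz2 m1 a hm1 haR).mpr (Or.inl e3)
  have hadj4 : G.Adj (z m1) (z m2) := (hz2 m1 m2 hm1 hm2).mpr (Or.inr e2)
  -- non-adjacencies
  have hna1 : ¬ G.Adj (z p1) (z m2) := by
    intro hh
    rcases (hz2 p1 m2 hp1 hm2).mp hh with h' | h'
    · rw [e1] at h'; exact hd1 h'
    · rw [e2] at h'; exact hd2 h'
  have hna2 : ¬ G.Adj (z m1) (z p2) := by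
    intro hh
    rcases (hz2 m1 p2 hm1 hp2).mp hh with h' | h'
    · rw [e3] at h'; exact hd4 h'
    · rw [e4] at h'; exact hd5 h'
  have key1 : ¬ (μ (z m2) ≤ μ (z p2)) := fun hle =>
    L p1 m2 (z a) (z p2) hp1 hm2 hd3 hna1 hadj1 hadj2 (hmin' m2 hm2) hle
  have key2 : ¬ (μ (z p2) ≤ μ (z m2)) := fun hle =>
    L m1 p2 (z a) (z m2) hm1 hp2 hd6 hna2 hadj3 hadj4 (hmin' p2 hp2) hle
  omega
end

section
/- Let G be a graph with the *-C1P witnessed by order ≼, let P be an induced path of odd length between vertices u and v, and let x be a vertex of G not in N[V(P)]. If v ≼ u ≼ x, then every neighbor of u and every neighbor of v is ≼ x; if x ≼ u ≼ v, then x is ≼ every neighbor of u and every neighbor of v; and if u ≼ x ≼ v, then every neighbor of v is ≼ x and x is ≼ every neighbor of u. -/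
open SimpleGraph

/-- Let `G` have the *-C1P witnessed by `μ`, let `z 0 … z ℓ` (with `u = z 0`,
`v = z ℓ`) be an induced path of odd length, and let `x ∉ N[V(P)]`. Then:
if `v ≼ u ≼ x`, all neighbors of `u` and of `v` are `≼ x`; if `x ≼ u ≼ v`,
`x` is `≼` all neighbors of `u` and of `v`; and if `u ≼ x ≼ v`, all neighbors of
`v` are `≼ x` and `x` is `≼` all neighbors of `u`. -/
theorem starC1P_oddPath_neighbors {V : Type*} (G : SimpleGraph V) (μ : V → ℤ)
    (hinj : Function.Injective μ)
    (hμ : ∀ w : V, ConsecAmong μ (G.neighborSet w) ∨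
      ConsecAmong μ (insert w (G.neighborSet w)))
    (ℓ : ℕ) (hℓ : Odd ℓ) (z : ℕ → V) (hz : IsInducedPath G ℓ z)
    (u v x : V) (hu : u = z 0) (hv : v = z ℓ)
    (hx : ∀ i ≤ ℓ, x ≠ z i ∧ ¬ G.Adj (z i) x) :
    (μ v ≤ μ u → μ u ≤ μ x →
      (∀ w, G.Adj u w → μ w ≤ μ x) ∧ (∀ w, G.Adj v w → μ w ≤ μ x)) ∧
    (μ x ≤ μ u → μ u ≤ μ v →
      (∀ w, G.Adj u w → μ x ≤ μ w) ∧ (∀ w, G.Adj v w → μ x ≤ μ w)) ∧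
    (μ u ≤ μ x → μ x ≤ μ v →
      (∀ w, G.Adj v w → μ w ≤ μ x) ∧ (∀ w, G.Adj u w → μ x ≤ μ w)) := by
  obtain ⟨m, hm⟩ := hℓ
  -- all neighbors of a path vertex are on the same side of x
  have same : ∀ i, i ≤ ℓ → ∀ a b, G.Adj (z i) a → G.Adj (z i) b →
      μ a ≤ μ x → μ b ≤ μ x := by
    intro i hi a b ha hb hax
    by_contra hbx
    push_neg at hbx
    obtain ⟨hxne, hxnadj⟩ := hx i hi
    rcases hμ (z i) with hc | hc
    · exact hxnadj (hc a ha b hb x hax hbx.le)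
    · have := hc a (Set.mem_insert_of_mem _ ha) b (Set.mem_insert_of_mem _ hb) x hax hbx.le
      rcases this with h | h
      · exact hxne h
      · exact hxnadj h
  have step : ∀ i, i + 2 ≤ ℓ → (μ (z i) ≤ μ x ↔ μ (z (i + 2)) ≤ μ x) := by
    intro i h
    have a1 : G.Adj (z (i + 1)) (z i) :=
      (hz.2 (i + 1) i (by omega) (by omega)).mpr (Or.inl rfl)
    have a2 : G.Adj (z (i + 1)) (z (i + 2)) :=
      (hz.2 (i + 1) (i + 2) (by omega) (by omega)).mpr (Or.inr rfl)
    exact ⟨fun h' => same (i + 1) (by omega) _ _ a1 a2 h',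
      fun h' => same (i + 1) (by omega) _ _ a2 a1 h'⟩
  have chain : ∀ k i, i + 2 * k ≤ ℓ → (μ (z i) ≤ μ x ↔ μ (z (i + 2 * k)) ≤ μ x) := by
    intro k
    induction k with
    | zero => intro i _; simp
    | succ n ih =>
      intro i h
      have h1 := ih i (by omega)
      have h2 := step (i + 2 * n) (by omega)
      rw [show i + 2 * (n + 1) = i + 2 * n + 2 by ring]
      exact h1.trans h2
  have hxu : x ≠ u := hu ▸ (hx 0 (by omega)).1
  have hxv : x ≠ v := hv ▸ (hx ℓ le_rfl).1
  have p1ℓ : (μ (z 1) ≤ μ x ↔ μ (z ℓ) ≤ μ x) := by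
    have := chain m 1 (by omega)
    rwa [show 1 + 2 * m = ℓ by omega] at this
  have p0ℓ : (μ (z 0) ≤ μ x ↔ μ (z (ℓ - 1)) ≤ μ x) := by
    have := chain m 0 (by omega)
    rwa [show 0 + 2 * m = ℓ - 1 by omega] at this
  have au1 : G.Adj (z 0) (z 1) := (hz.2 0 1 (by omega) (by omega)).mpr (Or.inr rfl)
  have avℓ : G.Adj (z ℓ) (z (ℓ - 1)) := by
    have := (hz.2 ℓ (ℓ - 1) le_rfl (by omega)).mpr (Or.inl (by omega))
    exact this
  -- helpers for strict inequalities
  have hne : ∀ {a b : V}, a ≠ b → μ a ≤ μ b → μ a < μ b := by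
    intro a b h hle
    exact lt_of_le_of_ne hle (fun h' => h (hinj h'))
  refine ⟨?_, ?_, ?_⟩
  · intro hvu hux
    have p0 : μ (z 0) ≤ μ x := hu ▸ hux
    have pℓ : μ (z ℓ) ≤ μ x := hv ▸ (le_trans hvu hux)
    constructor
    · intro w hw
      exact same 0 (by omega) (z 1) w au1 (hu ▸ hw) (p1ℓ.mpr pℓ)
    · intro w hw
      exact same ℓ le_rfl (z (ℓ - 1)) w avℓ (hv ▸ hw) (p0ℓ.mp p0)
  · intro hxu' huv
    have np0 : ¬ μ (z 0) ≤ μ x := by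
      have := hne hxu hxu'
      rw [hu] at this; omega
    have npℓ : ¬ μ (z ℓ) ≤ μ x := by
      have := hne hxv (le_trans hxu' huv)
      rw [hv] at this; omega
    constructor
    · intro w hw
      by_contra h
      push_neg at h
      exact npℓ (p1ℓ.mp (same 0 (by omega) w (z 1) (hu ▸ hw) au1 h.le))
    · intro w hw
      by_contra h
      push_neg at h
      exact np0 (p0ℓ.mpr (same ℓ le_rfl w (z (ℓ - 1)) (hv ▸ hw) avℓ h.le))
  · intro hux hxv'
    have p0 : μ (z 0) ≤ μ x := hu ▸ hux
    have npℓ : ¬ μ (z ℓ) ≤ μ x := by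
      have := hne hxv hxv'
      rw [hv] at this; omega
    constructor
    · intro w hw
      exact same ℓ le_rfl (z (ℓ - 1)) w avℓ (hv ▸ hw) (p0ℓ.mp p0)
    · intro w hw
      by_contra h
      push_neg at h
      exact npℓ (p1ℓ.mp (same 0 (by omega) w (z 1) (hu ▸ hw) au1 h.le))
end

section
/- The cycle C_5 on five vertices is AT-free (contains no asteroidal triple) but does not have the *-C1P. -/
open SimpleGraph

/-- Rank/list version of `ConsecAmong`. -/
def ConsecF (r : Fin 5 → Fin 5) (S : List (Fin 5)) : Prop :=
  ∀ a ∈ S, ∀ b ∈ S, ∀ c : Fin 5, r a ≤ r c → r c ≤ r b → c ∈ S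

instance consecF_dec (r : Fin 5 → Fin 5) (S : List (Fin 5)) : Decidable (ConsecF r S) := by
  unfold ConsecF; infer_instance

/-- For some vertex `v`, neither the open nor the closed neighborhood of `v` in `C₅`
is consecutive in the order given by the ranks `r`. -/
def BadRank (r : Fin 5 → Fin 5) : Prop :=
  ∃ v : Fin 5, ¬ ConsecF r [v - 1, v + 1] ∧ ¬ ConsecF r [v, v - 1, v + 1]

instance badRank_dec (r : Fin 5 → Fin 5) : Decidable (BadRank r) := by
  unfold BadRank; infer_instance

lemma key_adj : ∀ x y z : Fin 5, x ≠ y → y ≠ z → x ≠ z →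
    (cycleGraph 5).Adj x y ∨ (cycleGraph 5).Adj y z ∨ (cycleGraph 5).Adj x z := by
  decide

set_option maxRecDepth 100000 in
set_option maxHeartbeats 2000000 in
lemma key5 : ∀ a b c d e : Fin 5, Function.Injective (![a,b,c,d,e] : Fin 5 → Fin 5) →
    BadRank ![a,b,c,d,e] := by decide

lemma key_rank (r : Fin 5 → Fin 5) (h : Function.Injective r) : BadRank r := by
  have hr : r = ![r 0, r 1, r 2, r 3, r 4] := by
    funext v
    fin_cases v <;> rfl
  rw [hr]
  exact key5 (r 0) (r 1) (r 2) (r 3) (r 4) (hr ▸ h)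

/-- The cycle `C₅` is AT-free but does not have the *-C1P. -/
theorem c5_ATfree_not_starC1P :
    (∀ x y z : Fin 5, ¬ IsAT (cycleGraph 5) x y z) ∧ ¬ StarC1P (cycleGraph 5) := by
  constructor
  · rintro x y z ⟨hxy, hyz, hxz, ⟨p1, _, hs1⟩, ⟨p2, _, hs2⟩, ⟨p3, _, hs3⟩⟩
    rcases key_adj x y z hxy hyz hxz with h | h | h
    · exact (hs2 x p2.start_mem_support).2 h.symm
    · exact (hs1 y p1.end_mem_support).2 h.symm
    · exact (hs1 x p1.start_mem_support).2 h.symm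
  · rintro ⟨μ, hinj, hcond⟩
    set S : Finset ℤ := Finset.univ.image μ with hSdef
    have hcard : S.card = 5 := by
      rw [hSdef, Finset.card_image_of_injective _ hinj, Finset.card_univ, Fintype.card_fin]
    set e := S.orderIsoOfFin hcard with he
    have hmem : ∀ v : Fin 5, μ v ∈ S := fun v => Finset.mem_image_of_mem μ (Finset.mem_univ v)
    set r : Fin 5 → Fin 5 := fun v => e.symm ⟨μ v, hmem v⟩ with hr
    have hle : ∀ a b : Fin 5, μ a ≤ μ b ↔ r a ≤ r b := by
      intro a b
      rw [hr]
      simp only [OrderIso.le_iff_le, Subtype.mk_le_mk]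
    have hrinj : Function.Injective r := by
      intro a b hab
      apply hinj
      have := e.symm.injective hab
      exact congrArg Subtype.val this
    obtain ⟨v, hv1, hv2⟩ := key_rank r hrinj
    have hnbr : ∀ c : Fin 5, c ∈ (cycleGraph 5).neighborSet v ↔ c ∈ [v - 1, v + 1] := by
      intro c
      rw [show (cycleGraph 5).neighborSet v = {v - 1, v + 1} from cycleGraph_neighborSet]
      simp
    have hcnbr : ∀ c : Fin 5,
        c ∈ (insert v ((cycleGraph 5).neighborSet v) : Set (Fin 5)) ↔
          c ∈ [v, v - 1, v + 1] := by
      intro c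
      rw [Set.mem_insert_iff, hnbr c]
      simp
    rcases hcond v with h | h
    · refine hv1 ?_
      intro a ha b hb c hac hcb
      exact (hnbr c).1 (h a ((hnbr a).2 ha) b ((hnbr b).2 hb) c ((hle a c).2 hac) ((hle c b).2 hcb))
    · refine hv2 ?_
      intro a ha b hb c hac hcb
      exact (hcnbr c).1
        (h a ((hcnbr a).2 ha) b ((hcnbr b).2 hb) c ((hle a c).2 hac) ((hle c b).2 hcb))
end

section
/- Let G be a graph with the *-C1P witnessed by order ≼, and suppose {a,b,c} is a 2-asteroidal triple with a ≼ b ≼ c. Then every neighbor of c is ≼ a and c ≼ every neighbor of a (i.e., max(N(c)) ≼ a ≼ b ≼ c ≼ min(N(a)) in the order). -/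
open SimpleGraph

section Aux

variable {V : Type*} {G : SimpleGraph V} {μ : V → ℤ}

lemma ConsecAmong.neg {S : Set V} (h : ConsecAmong μ S) :
    ConsecAmong (fun v => -μ v) S := by
  intro a ha b hb c h1 h2
  exact h b hb a ha c (by simpa using h2) (by simpa using h1)

/-- Crossing lemma: if `u ~ v` crosses over `x` in the order, and `x` is not in the
closed neighborhood of `u`, then all neighbors of `u` lie above `x`. -/
lemma lemL
    (hμ : ∀ v : V, ConsecAmong μ (G.neighborSet v) ∨
      ConsecAmong μ (insert v (G.neighborSet v)))
    {u v x : V} (huv : G.Adj u v) (hxu : x ≠ u) (hxau : ¬ G.Adj x u)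
    (h1 : μ u < μ x) (h2 : μ x < μ v) :
    ∀ y, G.Adj u y → μ x < μ y := by
  intro y hy
  by_contra hc
  push_neg at hc
  rcases hμ u with h | h
  · have hmem : x ∈ G.neighborSet u :=
      h y (by exact hy) v (by exact huv) x hc h2.le
    exact hxau ((G.mem_neighborSet _ _).mp hmem).symm
  · have hmem : x ∈ insert u (G.neighborSet u) :=
      h u (Set.mem_insert _ _) v (Set.mem_insert_of_mem _ huv) x h1.le h2.le
    rcases hmem with h' | h'
    · exact hxu h'
    · exact hxau ((G.mem_neighborSet _ _).mp h').symm

/-- Path-end lemma: if a walk starting at `s` below `x` reaches above `x`, and `x` is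
far from every vertex of the walk, then all neighbors of `s` lie above `x`. -/
lemma lemM (hinj : Function.Injective μ)
    (hμ : ∀ v : V, ConsecAmong μ (G.neighborSet v) ∨
      ConsecAmong μ (insert v (G.neighborSet v)))
    (x : V) : ∀ {s t : V} (p : G.Walk s t),
      (∀ v ∈ p.support, x ≠ v ∧ ¬ G.Adj x v) →
      μ s < μ x → (∃ v ∈ p.support, μ x < μ v) →
      ∀ y, G.Adj s y → μ x < μ y := by
  intro s t p
  induction p with
  | nil =>
    intro _ hs ⟨v, hv, hxv⟩
    simp only [SimpleGraph.Walk.support_nil, List.mem_singleton] at hv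
    subst hv
    exact absurd hxv (by omega)
  | @cons s s' t h q ih =>
    intro hsupp hs hwit
    have hxs := hsupp s (SimpleGraph.Walk.start_mem_support _)
    have hxs' := hsupp s' (by simp [SimpleGraph.Walk.support_cons])
    have hne : μ x ≠ μ s' := fun he => hxs'.1 (hinj he)
    rcases hne.lt_or_gt with hlt | hlt
    · exact lemL hμ h hxs.1 hxs.2 hs hlt
    · have hall : ∀ y, G.Adj s' y → μ x < μ y := by
        apply ih
        · intro v hv
          exact hsupp v (by simp [SimpleGraph.Walk.support_cons, hv])
        · exact hlt
        · obtain ⟨v, hv, hxv⟩ := hwit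
          refine ⟨v, ?_, hxv⟩
          rcases (by simpa [SimpleGraph.Walk.support_cons] using hv : v = s ∨ v ∈ q.support) with rfl | hv'
          · exact absurd hxv (by omega)
          · exact hv'
      exact absurd (hall s h.symm) (by omega)

lemma far_of_edist {x v : V} (h : (2 : ℕ∞) < G.edist x v) :
    x ≠ v ∧ ¬ G.Adj x v := by
  constructor
  · rintro rfl
    simp [SimpleGraph.edist_self] at h
  · intro hadj
    have := SimpleGraph.edist_eq_one_iff_adj.mpr hadj
    rw [this] at h
    exact absurd h (by decide)

lemma far_of_adj_edist {x w v : V} (hadj : G.Adj x w) (h : (2 : ℕ∞) < G.edist x v) :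
    w ≠ v ∧ ¬ G.Adj w v := by
  have h1 : G.edist x w = 1 := SimpleGraph.edist_eq_one_iff_adj.mpr hadj
  constructor
  · rintro rfl
    rw [h1] at h
    exact absurd h (by decide)
  · intro hwv
    have h2 : G.edist w v = 1 := SimpleGraph.edist_eq_one_iff_adj.mpr hwv
    have := SimpleGraph.edist_triangle (G := G) (u := x) (v := w) (w := v)
    rw [h1, h2] at this
    have : G.edist x v ≤ 2 := by exact_mod_cast this
    exact absurd (lt_of_lt_of_le h this) (by simp)

/-- Key lemma: given the three walks of a 2-asteroidal triple with `μ a < μ b < μ c`,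
every neighbor of `c` lies strictly below `a`. -/
lemma keyLemma (hinj : Function.Injective μ)
    (hμ : ∀ v : V, ConsecAmong μ (G.neighborSet v) ∨
      ConsecAmong μ (insert v (G.neighborSet v)))
    (a b c : V)
    (pab : G.Walk a b) (h1 : ∀ v ∈ pab.support, (2 : ℕ∞) < G.edist c v)
    (pac : G.Walk a c) (h2 : ∀ v ∈ pac.support, (2 : ℕ∞) < G.edist b v)
    (pbc : G.Walk b c) (h3 : ∀ v ∈ pbc.support, (2 : ℕ∞) < G.edist a v)
    (hab : μ a < μ b) (hbc : μ b < μ c) :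
    ∀ w, G.Adj c w → μ w < μ a := by
  have negμinj : Function.Injective (fun v => -μ v) := by
    intro u v h
    exact hinj (by simpa using h)
  have hμneg : ∀ v : V, ConsecAmong (fun v => -μ v) (G.neighborSet v) ∨
      ConsecAmong (fun v => -μ v) (insert v (G.neighborSet v)) :=
    fun v => (hμ v).imp ConsecAmong.neg ConsecAmong.neg
  -- Every neighbor of c is below b (from the a-c walk, with x := b).
  have hNc_lt_b : ∀ y, G.Adj c y → μ y < μ b := by
    intro y hy
    have := lemM (μ := fun v => -μ v) negμinj hμneg b pac.reverse
      (by
        intro v hv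
        rw [SimpleGraph.Walk.support_reverse, List.mem_reverse] at hv
        exact far_of_edist (h2 v hv))
      (by simpa using hbc)
      ⟨a, by
        rw [SimpleGraph.Walk.support_reverse, List.mem_reverse]
        exact SimpleGraph.Walk.start_mem_support _, by simpa using hab⟩
      y hy
    simpa using this
  intro w hcw
  by_contra hc
  push_neg at hc
  have hfac : a ≠ c ∧ ¬ G.Adj a c := far_of_edist (h3 c (SimpleGraph.Walk.end_mem_support _))
  have haw : μ a < μ w := by
    rcases hc.lt_or_eq with h | h
    · exact h
    · exact absurd (hinj h ▸ hcw.symm) hfac.2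
  have hwb : μ w < μ b := hNc_lt_b w hcw
  cases pbc with
  | nil => exact absurd hbc (by omega)
  | @cons b v₁ c hadj q =>
    -- all neighbors of b are below w (from the a-b walk, with x := w)
    have hNb : ∀ y, G.Adj b y → μ y < μ w := by
      intro y hy
      have := lemM (μ := fun v => -μ v) negμinj hμneg w pab.reverse
        (by
          intro v hv
          rw [SimpleGraph.Walk.support_reverse, List.mem_reverse] at hv
          exact far_of_adj_edist hcw (h1 v hv))
        (by simpa using hwb)
        ⟨a, by
          rw [SimpleGraph.Walk.support_reverse, List.mem_reverse]
          exact SimpleGraph.Walk.start_mem_support _, by simpa using haw⟩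
        y hy
      simpa using this
    have hv1w : μ v₁ < μ w := hNb v₁ hadj
    have hv1mem : v₁ ∈ (SimpleGraph.Walk.cons hadj q).support := by
      simp [SimpleGraph.Walk.support_cons]
    have hav1 : a ≠ v₁ := (far_of_edist (h3 v₁ hv1mem)).1
    have hav1' : μ a ≠ μ v₁ := fun h => hav1 (hinj h)
    rcases hav1'.lt_or_gt with hlt | hlt
    · -- μ a < μ v₁ : use the a-c walk with x := v₁
      have := lemM (μ := fun v => -μ v) negμinj hμneg v₁ pac.reverse
        (by
          intro v hv
          rw [SimpleGraph.Walk.support_reverse, List.mem_reverse] at hv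
          exact far_of_adj_edist hadj (h2 v hv))
        (by simp; omega)
        ⟨a, by
          rw [SimpleGraph.Walk.support_reverse, List.mem_reverse]
          exact SimpleGraph.Walk.start_mem_support _, by simpa using hlt⟩
        w hcw
      simp at this
      omega
    · -- μ v₁ < μ a : use the b-c walk with x := a
      have := lemM (μ := fun v => -μ v) negμinj hμneg a (SimpleGraph.Walk.cons hadj q).reverse
        (by
          intro v hv
          rw [SimpleGraph.Walk.support_reverse, List.mem_reverse] at hv
          exact far_of_edist (h3 v hv))
        (by simp; omega)
        ⟨v₁, by
          rw [SimpleGraph.Walk.support_reverse, List.mem_reverse]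
          exact hv1mem, by simpa using hlt⟩
        w hcw
      simp at this
      omega

end Aux

/-- If `G` has the *-C1P witnessed by `μ` and `{a,b,c}` is a `2`-asteroidal triple
with `a ≼ b ≼ c`, then every neighbor of `c` is `≼ a` and `c ≼` every neighbor of
`a`. -/
theorem starC1P_2AT_order {V : Type*} (G : SimpleGraph V) (μ : V → ℤ)
    (hinj : Function.Injective μ)
    (hμ : ∀ v : V, ConsecAmong μ (G.neighborSet v) ∨
      ConsecAmong μ (insert v (G.neighborSet v)))
    (a b c : V) (hAT : Is2AT G a b c) (hab : μ a ≤ μ b) (hbc : μ b ≤ μ c) :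
    (∀ w, G.Adj c w → μ w ≤ μ a) ∧ (∀ w, G.Adj a w → μ c ≤ μ w) := by
  obtain ⟨hne_ab, hne_bc, hne_ac, ⟨pab, _, h1⟩, ⟨pac, _, h2⟩, ⟨pbc, _, h3⟩⟩ := hAT
  have hab' : μ a < μ b := lt_of_le_of_ne hab (fun h => hne_ab (hinj h))
  have hbc' : μ b < μ c := lt_of_le_of_ne hbc (fun h => hne_bc (hinj h))
  have negμinj : Function.Injective (fun v => -μ v) := by
    intro u v h
    exact hinj (by simpa using h)
  have hμneg : ∀ v : V, ConsecAmong (fun v => -μ v) (G.neighborSet v) ∨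
      ConsecAmong (fun v => -μ v) (insert v (G.neighborSet v)) :=
    fun v => (hμ v).imp ConsecAmong.neg ConsecAmong.neg
  constructor
  · intro w hw
    exact (keyLemma hinj hμ a b c pab h1 pac h2 pbc h3 hab' hbc' w hw).le
  · intro w hw
    have := keyLemma (μ := fun v => -μ v) negμinj hμneg c b a
      pbc.reverse (by
        intro v hv
        rw [SimpleGraph.Walk.support_reverse, List.mem_reverse] at hv
        exact h3 v hv)
      pac.reverse (by
        intro v hv
        rw [SimpleGraph.Walk.support_reverse, List.mem_reverse] at hv
        exact h2 v hv)
      pab.reverse (by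
        intro v hv
        rw [SimpleGraph.Walk.support_reverse, List.mem_reverse] at hv
        exact h1 v hv)
      (by simpa using hbc') (by simpa using hab')
      w hw
    simp at this
    omega
end

section
/- Let G be a graph with the *-C1P witnessed by order ≼, and let P = z_0 z_1 … z_ℓ be an induced path with z_0 ≼ z_ℓ. If ℓ is even, then every vertex x with z_0 ≼ x ≼ z_ℓ that does not lie on P has a neighbor on P. Consequently, if three vertices a ≼ b ≼ c form a 2-asteroidal triple in G, then any induced path from a to c avoiding N^2[b] must have odd length. -/
open SimpleGraph

theorem starC1P_part1 {V : Type*} (G : SimpleGraph V)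
    (μ : V → ℤ) (hinj : Function.Injective μ)
    (hμ : ∀ v : V, ConsecAmong μ (G.neighborSet v) ∨
      ConsecAmong μ (insert v (G.neighborSet v))) :
    ∀ (ℓ : ℕ), Even ℓ → ∀ z : ℕ → V, IsInducedPath G ℓ z → μ (z 0) ≤ μ (z ℓ) →
      ∀ x : V, μ (z 0) ≤ μ x → μ x ≤ μ (z ℓ) → (∀ i ≤ ℓ, x ≠ z i) →
        ∃ i ≤ ℓ, G.Adj (z i) x := by
  intro ℓ hev z hz hle x hx0 hxl hxne
  by_contra hadj
  push_neg at hadj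
  obtain ⟨hzinj, hzadj⟩ := hz
  have hne : ∀ i ≤ ℓ, μ x ≠ μ (z i) := fun i hi h => hxne i hi (hinj h)
  let P : ℕ → Prop := fun i => μ (z i) < μ x
  have hlt : ∀ i ≤ ℓ, ¬ P i → μ x < μ (z i) := fun i hi h =>
    lt_of_le_of_ne (not_lt.1 h) (hne i hi)
  have hgt : ∀ i, P i → μ (z i) < μ x := fun i h => h
  have hP0 : P 0 := lt_of_le_of_ne hx0 (fun h => hne 0 (Nat.zero_le _) h.symm)
  have hPl : ¬ P ℓ := not_lt.2 hxl
  -- closed-neighborhood bracketing is impossible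
  have closedCase : ∀ i ≤ ℓ, ConsecAmong μ (insert (z i) (G.neighborSet (z i))) →
      ∀ u v : V, (u = z i ∨ G.Adj (z i) u) → (v = z i ∨ G.Adj (z i) v) →
      μ u < μ x → μ x < μ v → False := by
    intro i hi hcon u v hu hv h1 h2
    have hu' : u ∈ insert (z i) (G.neighborSet (z i)) := by
      rcases hu with h | h
      · exact Or.inl h
      · exact Or.inr h
    have hv' : v ∈ insert (z i) (G.neighborSet (z i)) := by
      rcases hv with h | h
      · exact Or.inl h
      · exact Or.inr h
    have hx : x ∈ insert (z i) (G.neighborSet (z i)) :=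
      hcon u hu' v hv' x h1.le h2.le
    rcases hx with hx | hx
    · exact hxne i hi hx
    · exact hadj i hi hx
  -- open-neighborhood bracketing is impossible
  have openCase : ∀ i ≤ ℓ, ConsecAmong μ (G.neighborSet (z i)) →
      ∀ u v : V, G.Adj (z i) u → G.Adj (z i) v → μ u < μ x → μ x < μ v → False := by
    intro i hi hcon u v hu hv h1 h2
    exact hadj i hi (hcon u hu v hv x h1.le h2.le)
  -- at a crossing, both endpoints have open-consecutive neighborhoods
  have crossOpen : ∀ i, i + 1 ≤ ℓ → ¬ (P i ↔ P (i+1)) →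
      ConsecAmong μ (G.neighborSet (z i)) ∧ ConsecAmong μ (G.neighborSet (z (i+1))) := by
    intro i hi hc
    have hil : i ≤ ℓ := Nat.le_of_succ_le hi
    have hadj01 : G.Adj (z i) (z (i+1)) := (hzadj i (i+1) hil hi).2 (Or.inr rfl)
    have hcases : (P i ∧ ¬ P (i+1)) ∨ (¬ P i ∧ P (i+1)) := by tauto
    constructor
    · rcases hμ (z i) with h | h
      · exact h
      · exfalso
        rcases hcases with ⟨h1, h2⟩ | ⟨h1, h2⟩
        · exact closedCase i hil h (z i) (z (i+1)) (Or.inl rfl) (Or.inr hadj01)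
            (hgt i h1) (hlt (i+1) hi h2)
        · exact closedCase i hil h (z (i+1)) (z i) (Or.inr hadj01) (Or.inl rfl)
            (hgt (i+1) h2) (hlt i hil h1)
    · rcases hμ (z (i+1)) with h | h
      · exact h
      · exfalso
        rcases hcases with ⟨h1, h2⟩ | ⟨h1, h2⟩
        · exact closedCase (i+1) hi h (z i) (z (i+1)) (Or.inr hadj01.symm) (Or.inl rfl)
            (hgt i h1) (hlt (i+1) hi h2)
        · exact closedCase (i+1) hi h (z (i+1)) (z i) (Or.inl rfl) (Or.inr hadj01.symm)
            (hgt (i+1) h2) (hlt i (Nat.le_of_succ_le hi) h1)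
  -- crossings propagate downward
  have propDown : ∀ i, 1 ≤ i → i + 1 ≤ ℓ → ¬ (P i ↔ P (i+1)) →
      ¬ (P (i-1) ↔ P i) := by
    intro i h1 hi hc hcontra
    have hopen := (crossOpen i hi hc).1
    have hil : i ≤ ℓ := Nat.le_of_succ_le hi
    have hi1l : i - 1 ≤ ℓ := le_trans (Nat.sub_le _ _) hil
    have hadjm : G.Adj (z i) (z (i-1)) := (hzadj i (i-1) hil hi1l).2 (Or.inl (by omega))
    have hadjp : G.Adj (z i) (z (i+1)) := (hzadj i (i+1) hil hi).2 (Or.inr rfl)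
    have hdiff : ¬ (P (i-1) ↔ P (i+1)) := by tauto
    have hcases : (P (i-1) ∧ ¬ P (i+1)) ∨ (¬ P (i-1) ∧ P (i+1)) := by tauto
    rcases hcases with ⟨ha, hb⟩ | ⟨ha, hb⟩
    · exact openCase i hil hopen (z (i-1)) (z (i+1)) hadjm hadjp
        (hgt _ ha) (hlt (i+1) hi hb)
    · exact openCase i hil hopen (z (i+1)) (z (i-1)) hadjp hadjm
        (hgt _ hb) (hlt (i-1) hi1l ha)
  -- crossings propagate upward
  have propUp : ∀ i, i + 2 ≤ ℓ → ¬ (P i ↔ P (i+1)) →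
      ¬ (P (i+1) ↔ P (i+1+1)) := by
    intro i hi hc hcontra
    have hi1 : i + 1 + 1 ≤ ℓ := by omega
    have hopen := (crossOpen i (by omega) hc).2
    have hi1l : i + 1 ≤ ℓ := by omega
    have hil : i ≤ ℓ := by omega
    have hadjm : G.Adj (z (i+1)) (z i) := (hzadj (i+1) i hi1l hil).2 (Or.inl rfl)
    have hadjp : G.Adj (z (i+1)) (z (i+2)) := (hzadj (i+1) (i+2) hi1l (by omega)).2 (Or.inr rfl)
    have hdiff : ¬ (P i ↔ P (i+2)) := by
      have h2 : (P (i+1+1)) = (P (i+2)) := by norm_num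
      rw [h2] at hcontra; tauto
    have hcases : (P i ∧ ¬ P (i+2)) ∨ (¬ P i ∧ P (i+2)) := by tauto
    rcases hcases with ⟨ha, hb⟩ | ⟨ha, hb⟩
    · exact openCase (i+1) hi1l hopen (z i) (z (i+2)) hadjm hadjp
        (hgt _ ha) (hlt (i+2) (by omega) hb)
    · exact openCase (i+1) hi1l hopen (z (i+2)) (z i) hadjp hadjm
        (hgt _ hb) (hlt i hil ha)
  -- there is at least one crossing
  have exCross : ∃ i, i + 1 ≤ ℓ ∧ ¬ (P i ↔ P (i+1)) := by
    by_contra h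
    push_neg at h
    have hall : ∀ i ≤ ℓ, P i := by
      intro i hi
      induction i with
      | zero => exact hP0
      | succ n ih => exact (h n hi).1 (ih (Nat.le_of_succ_le hi))
    exact hPl (hall ℓ le_rfl)
  obtain ⟨i₀, hi₀, hc₀⟩ := exCross
  -- all edges are crossings
  have down : ∀ j ≤ i₀, ¬ (P (i₀ - j) ↔ P (i₀ - j + 1)) := by
    intro j hj
    induction j with
    | zero => simpa using hc₀
    | succ n ih =>
      have hn : n ≤ i₀ := Nat.le_of_succ_le hj
      have h' := ih hn
      have h1 : 1 ≤ i₀ - n := by omega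
      have h2 : i₀ - n + 1 ≤ ℓ := by omega
      have hthis := propDown (i₀ - n) h1 h2 h'
      rw [show i₀ - n - 1 = i₀ - (n+1) from by omega] at hthis
      rw [show i₀ - (n+1) + 1 = i₀ - n from by omega]
      exact hthis
  have up : ∀ j, i₀ + j + 1 ≤ ℓ → ¬ (P (i₀ + j) ↔ P (i₀ + j + 1)) := by
    intro j
    induction j with
    | zero => intro _; simpa using hc₀
    | succ n ih =>
      intro hj
      have h' := ih (by omega)
      have hthis := propUp (i₀ + n) (by omega) h'
      rw [show i₀ + n + 1 = i₀ + (n+1) from by omega] at hthis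
      exact hthis
  have allCross : ∀ i, i + 1 ≤ ℓ → ¬ (P i ↔ P (i+1)) := by
    intro i hi
    rcases le_or_gt i i₀ with h | h
    · have hthis := down (i₀ - i) (Nat.sub_le _ _)
      rw [show i₀ - (i₀ - i) = i from by omega] at hthis
      exact hthis
    · have hthis := up (i - i₀) (by omega)
      rw [show i₀ + (i - i₀) = i from by omega] at hthis
      exact hthis
  -- parity contradiction
  have alt2 : ∀ i, i + 2 ≤ ℓ → (P i ↔ P (i+2)) := by
    intro i hi
    have h1 := allCross i (by omega)
    have h2 := allCross (i+1) (by omega)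
    rw [show i + 1 + 1 = i + 2 from rfl] at h2
    tauto
  obtain ⟨m, hm⟩ := hev
  have heven : ∀ k, k + k ≤ ℓ → P (k + k) := by
    intro k
    induction k with
    | zero => intro _; exact hP0
    | succ n ih =>
      intro hk
      have h1 : n + n + 2 ≤ ℓ := by omega
      have h2 := (alt2 (n+n) h1).1 (ih (by omega))
      rw [show n + 1 + (n + 1) = n + n + 2 from by omega]
      exact h2
  exact hPl (by rw [hm]; exact heven m (by omega))


/-- Let `G` have the *-C1P witnessed by `μ`. (1) For any induced path `z 0 … z ℓ`
of even length with `z 0 ≼ z ℓ`, every vertex `x` with `z 0 ≼ x ≼ z ℓ` not on the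
path has a neighbor on the path. (2) If `a ≼ b ≼ c` is a `2`-asteroidal triple,
then any induced path from `a` to `c` avoiding `N²[b]` has odd length. -/
theorem starC1P_even_between_and_odd_AT_path {V : Type*} (G : SimpleGraph V)
    (μ : V → ℤ) (hinj : Function.Injective μ)
    (hμ : ∀ v : V, ConsecAmong μ (G.neighborSet v) ∨
      ConsecAmong μ (insert v (G.neighborSet v))) :
    (∀ (ℓ : ℕ), Even ℓ → ∀ z : ℕ → V, IsInducedPath G ℓ z → μ (z 0) ≤ μ (z ℓ) →
      ∀ x : V, μ (z 0) ≤ μ x → μ x ≤ μ (z ℓ) → (∀ i ≤ ℓ, x ≠ z i) →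
        ∃ i ≤ ℓ, G.Adj (z i) x) ∧
    (∀ a b c : V, Is2AT G a b c → μ a ≤ μ b → μ b ≤ μ c →
      ∀ (ℓ : ℕ) (z : ℕ → V), IsInducedPath G ℓ z → z 0 = a → z ℓ = c →
        (∀ i ≤ ℓ, (2 : ℕ∞) < G.edist b (z i)) → Odd ℓ) := by
  constructor
  · exact starC1P_part1 G μ hinj hμ
  · intro a b c hAT hab hbc ℓ z hz h0 hl hdist
    rcases Nat.even_or_odd ℓ with hev | hodd
    · exfalso
      have hle : μ (z 0) ≤ μ (z ℓ) := by rw [h0, hl]; exact le_trans hab hbc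
      have hneb : ∀ i ≤ ℓ, b ≠ z i := by
        intro i hi h
        have hd := hdist i hi
        rw [← h, SimpleGraph.edist_self] at hd
        simp at hd
      obtain ⟨i, hi, hadj⟩ := starC1P_part1 G μ hinj hμ ℓ hev z hz hle b
        (by rw [h0]; exact hab) (by rw [hl]; exact hbc) hneb
      have hd := hdist i hi
      rw [(SimpleGraph.edist_eq_one_iff_adj).2 hadj.symm] at hd
      exact absurd hd (by norm_num)
    · exact hodd
end
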